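/- arXiv:1307.4391 — 2 statements merged into one kernel-verified Lean document; each statement's English description precedes it below -/
import Mathlib

section
/- For any diagonal δ of P (internal or boundary) and any label j ∈ [n+1]: if j ∈ D ∩ Abo(δ) then {1,…,j} ⊆ Abo(δ) or {j,j+1,…,n+1} ⊆ Abo(δ); and if j ∈ U ∩ Bel(δ) then {1,…,j} ⊆ Bel(δ) or {j,j+1,…,n+1} ⊆ Bel(δ). -/
attribute [local instance] Classical.propDecidable

noncomputable section

namespace Spines

/-- Position of vertex `v ∈ {0,…,n+2}` in the counterclockwise boundary cyclic order:
`0`, then the elements of `D` in increasing order, then `n+2`, then the elements of `U`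
in decreasing order. -/
def pos (n : ℕ) (D U : Finset ℕ) (v : ℕ) : ℕ :=
  if v = 0 then 0
  else if v = n + 2 then D.card + 1
  else if v ∈ D then 1 + (D.filter (fun d => d < v)).card
  else D.card + 2 + (U.filter (fun u => v < u)).card

/-- Cyclic distance from `a` to `v` in counterclockwise direction. -/
def relpos (n : ℕ) (D U : Finset ℕ) (a v : ℕ) : ℕ :=
  (pos n D U v + (n + 3) - pos n D U a) % (n + 3)

/-- `v` lies strictly inside the counterclockwise boundary arc from `a` to `b`. -/
def StrictBetween (n : ℕ) (D U : Finset ℕ) (a b v : ℕ) : Prop :=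
  v ≤ n + 2 ∧ 0 < relpos n D U a v ∧ relpos n D U a v < relpos n D U a b

/-- A diagonal, encoded as an ordered pair `(a,b)` with `a < b ≤ n+2`. -/
def IsDiag (n : ℕ) (δ : ℕ × ℕ) : Prop := δ.1 < δ.2 ∧ δ.2 ≤ n + 2

/-- A boundary edge: the endpoints are adjacent in the cyclic order. -/
def IsBoundaryEdge (n : ℕ) (D U : Finset ℕ) (δ : ℕ × ℕ) : Prop :=
  IsDiag n δ ∧ (relpos n D U δ.1 δ.2 = 1 ∨ relpos n D U δ.2 δ.1 = 1)

/-- An internal diagonal. -/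
def IsInternalDiag (n : ℕ) (D U : Finset ℕ) (δ : ℕ × ℕ) : Prop :=
  IsDiag n δ ∧ ¬ IsBoundaryEdge n D U δ

/-- Two diagonals cross: the four endpoints are pairwise distinct and exactly one
endpoint of the second lies strictly inside each of the two arcs determined by the first. -/
def Cross (n : ℕ) (D U : Finset ℕ) (δ δ' : ℕ × ℕ) : Prop :=
  δ.1 ≠ δ.2 ∧ δ'.1 ≠ δ'.2 ∧ δ.1 ≠ δ'.1 ∧ δ.1 ≠ δ'.2 ∧ δ.2 ≠ δ'.1 ∧ δ.2 ≠ δ'.2 ∧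
  ((StrictBetween n D U δ.1 δ.2 δ'.1 ∧ StrictBetween n D U δ.2 δ.1 δ'.2) ∨
   (StrictBetween n D U δ.1 δ.2 δ'.2 ∧ StrictBetween n D U δ.2 δ.1 δ'.1))

/-- A triangulation: a maximal set of pairwise non-crossing internal diagonals. -/
def IsTriangulation (n : ℕ) (D U : Finset ℕ) (T : Finset (ℕ × ℕ)) : Prop :=
  (∀ δ ∈ T, IsInternalDiag n D U δ) ∧
  (∀ δ ∈ T, ∀ δ' ∈ T, ¬ Cross n D U δ δ') ∧
  (∀ δ, IsInternalDiag n D U δ → δ ∉ T → ∃ δ' ∈ T, Cross n D U δ δ')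

/-- `a` and `b` (with `a < b`) are joined by a diagonal of `T` or a boundary edge. -/
def EdgeOf (n : ℕ) (D U : Finset ℕ) (T : Finset (ℕ × ℕ)) (a b : ℕ) : Prop :=
  (a, b) ∈ T ∨ IsBoundaryEdge n D U (a, b)

/-- `{i,j,k}` with `i<j<k` is a triangle of the triangulation `T`. -/
def IsTriangleOf (n : ℕ) (D U : Finset ℕ) (T : Finset (ℕ × ℕ)) (i j k : ℕ) : Prop :=
  i < j ∧ j < k ∧ k ≤ n + 2 ∧
    EdgeOf n D U T i j ∧ EdgeOf n D U T j k ∧ EdgeOf n D U T i k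

/-- `Bel δ`: labels in `[n+1]` strictly inside the ccw arc from `δ.1` to `δ.2`,
together with the endpoints of `δ` lying in `U`. -/
def Bel (n : ℕ) (D U : Finset ℕ) (δ : ℕ × ℕ) : Finset ℕ :=
  (Finset.Icc 1 (n + 1)).filter
    (fun j => StrictBetween n D U δ.1 δ.2 j ∨ (j ∈ U ∧ (j = δ.1 ∨ j = δ.2)))

def bel (n : ℕ) (D U : Finset ℕ) (δ : ℕ × ℕ) : ℕ := (Bel n D U δ).card

def Abo (n : ℕ) (D U : Finset ℕ) (δ : ℕ × ℕ) : Finset ℕ :=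
  Finset.Icc 1 (n + 1) \ Bel n D U δ

/-- The coordinates of the point `x(T)` associated to a triangulation `T`. -/
def xcoord (n : ℕ) (D U : Finset ℕ) (T : Finset (ℕ × ℕ)) (j : ℕ) : ℝ :=
  if h : ∃ p : ℕ × ℕ, IsTriangleOf n D U T p.1 j p.2 then
    if j ∈ D then
      ((bel n D U (h.choose.1, j) : ℝ) + 1) * ((bel n D U (j, h.choose.2) : ℝ) + 1)
    else
      ((n : ℝ) + 2) -
        (((n : ℝ) + 2) - (bel n D U (h.choose.1, j) : ℝ)) *
          (((n : ℝ) + 2) - (bel n D U (j, h.choose.2) : ℝ))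
  else 0

/-- Middle vertex of the triple `{a,b,c}` with `a < b` and `c ∉ {a,b}`. -/
def midOf (a b c : ℕ) : ℕ := if c < a then a else if c < b then c else b

/-- `c` is the third vertex of a triangle of `T` containing the diagonal `δ`. -/
def TriWith (n : ℕ) (D U : Finset ℕ) (T : Finset (ℕ × ℕ)) (δ : ℕ × ℕ) (c : ℕ) : Prop :=
  if c < δ.1 then IsTriangleOf n D U T c δ.1 δ.2
  else if c < δ.2 then IsTriangleOf n D U T δ.1 c δ.2
  else IsTriangleOf n D U T δ.1 δ.2 c

/-- `s_δ`: middle vertex of the triangle of `T` below `δ` (third vertex strictly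
inside the ccw arc from `δ.1` to `δ.2`). -/
def spineSrc (n : ℕ) (D U : Finset ℕ) (T : Finset (ℕ × ℕ)) (δ : ℕ × ℕ) : ℕ :=
  if h : ∃ c, StrictBetween n D U δ.1 δ.2 c ∧ TriWith n D U T δ c then
    midOf δ.1 δ.2 h.choose
  else 0

/-- `t_δ`: middle vertex of the triangle of `T` above `δ` (third vertex strictly
inside the ccw arc from `δ.2` to `δ.1`). -/
def spineTgt (n : ℕ) (D U : Finset ℕ) (T : Finset (ℕ × ℕ)) (δ : ℕ × ℕ) : ℕ :=
  if h : ∃ c, StrictBetween n D U δ.2 δ.1 c ∧ TriWith n D U T δ c then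
    midOf δ.1 δ.2 h.choose
  else 0

/-- `(p,q)` is an arc of the spine of `T`. -/
def SpineArc (n : ℕ) (D U : Finset ℕ) (T : Finset (ℕ × ℕ)) (p q : ℕ) : Prop :=
  ∃ δ ∈ T, spineSrc n D U T δ = p ∧ spineTgt n D U T δ = q

/-- The finite set of all triangulations of the polygon. -/
def allTri (n : ℕ) (D U : Finset ℕ) : Finset (Finset (ℕ × ℕ)) :=
  ((Finset.range (n + 3) ×ˢ Finset.range (n + 3)).filter
      (fun δ => IsInternalDiag n D U δ)).powerset.filter
    (fun T => IsTriangulation n D U T)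

end Spines

namespace Spines

/-- `x` lies on the "down" boundary path `0, d_1, …, d_k, n+2`. -/
def DSide (n : ℕ) (D : Finset ℕ) (x : ℕ) : Prop := x = 0 ∨ x ∈ D ∨ x = n + 2

section Aux

variable {n : ℕ} {D U : Finset ℕ}

lemma mem_D_bd (hUD : D ∪ U = Finset.Icc 1 (n + 1)) {v : ℕ} (hv : v ∈ D) :
    1 ≤ v ∧ v ≤ n + 1 := by
  have h : v ∈ D ∪ U := Finset.mem_union_left _ hv
  rw [hUD, Finset.mem_Icc] at h; exact h

lemma mem_U_bd (hUD : D ∪ U = Finset.Icc 1 (n + 1)) {v : ℕ} (hv : v ∈ U) :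
    1 ≤ v ∧ v ≤ n + 1 := by
  have h : v ∈ D ∪ U := Finset.mem_union_right _ hv
  rw [hUD, Finset.mem_Icc] at h; exact h

lemma dside_not_U (hUD : D ∪ U = Finset.Icc 1 (n + 1)) (hdisj : Disjoint D U)
    {x : ℕ} (hx : DSide n D x) : x ∉ U := by
  rcases hx with rfl | hx | rfl
  · intro h; have := (mem_U_bd hUD h).1; omega
  · exact fun h => Finset.disjoint_left.mp hdisj hx h
  · intro h; have := (mem_U_bd hUD h).2; omega

lemma classify (hUD : D ∪ U = Finset.Icc 1 (n + 1)) {v : ℕ}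
    (h1 : 1 ≤ v) (h2 : v ≤ n + 1) : v ∈ D ∨ v ∈ U := by
  have : v ∈ D ∪ U := by rw [hUD, Finset.mem_Icc]; exact ⟨h1, h2⟩
  exact Finset.mem_union.mp this

lemma card_DU (hUD : D ∪ U = Finset.Icc 1 (n + 1)) (hdisj : Disjoint D U) :
    D.card + U.card = n + 1 := by
  have h := Finset.card_union_of_disjoint hdisj
  rw [hUD, Nat.card_Icc] at h
  omega

lemma pos_zero : pos n D U 0 = 0 := by simp [pos]

lemma pos_top : pos n D U (n + 2) = D.card + 1 := by simp [pos]

lemma pos_D (hUD : D ∪ U = Finset.Icc 1 (n + 1)) {v : ℕ} (hv : v ∈ D) :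
    pos n D U v = 1 + (D.filter (fun d => d < v)).card := by
  obtain ⟨h1, h2⟩ := mem_D_bd hUD hv
  unfold pos
  rw [if_neg (by omega), if_neg (by omega), if_pos hv]

lemma pos_U (hUD : D ∪ U = Finset.Icc 1 (n + 1)) (hdisj : Disjoint D U)
    {v : ℕ} (hv : v ∈ U) :
    pos n D U v = D.card + 2 + (U.filter (fun u => v < u)).card := by
  obtain ⟨h1, h2⟩ := mem_U_bd hUD hv
  have hvD : v ∉ D := fun h => Finset.disjoint_left.mp hdisj h hv
  unfold pos
  rw [if_neg (by omega), if_neg (by omega), if_neg hvD]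

lemma pos_D_le (hUD : D ∪ U = Finset.Icc 1 (n + 1)) {v : ℕ} (hv : v ∈ D) :
    1 ≤ pos n D U v ∧ pos n D U v ≤ D.card := by
  rw [pos_D hUD hv]
  have hss : D.filter (fun d => d < v) ⊂ D := by
    rw [Finset.filter_ssubset]; exact ⟨v, hv, lt_irrefl v⟩
  have := Finset.card_lt_card hss
  omega

lemma pos_U_le (hUD : D ∪ U = Finset.Icc 1 (n + 1)) (hdisj : Disjoint D U)
    {v : ℕ} (hv : v ∈ U) :
    D.card + 2 ≤ pos n D U v ∧ pos n D U v ≤ n + 2 := by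
  rw [pos_U hUD hdisj hv]
  have hss : U.filter (fun u => v < u) ⊂ U := by
    rw [Finset.filter_ssubset]; exact ⟨v, hv, lt_irrefl v⟩
  have h1 := Finset.card_lt_card hss
  have h2 := card_DU hUD hdisj
  omega

lemma pos_dside_le (hUD : D ∪ U = Finset.Icc 1 (n + 1)) (hdisj : Disjoint D U)
    {x : ℕ} (hx : DSide n D x) : pos n D U x ≤ D.card + 1 := by
  rcases hx with rfl | hx | rfl
  · rw [pos_zero]; omega
  · have := pos_D_le hUD hx; omega
  · rw [pos_top]

lemma pos_le (hUD : D ∪ U = Finset.Icc 1 (n + 1)) (hdisj : Disjoint D U)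
    {v : ℕ} (hv : v ≤ n + 2) : pos n D U v ≤ n + 2 := by
  have hcard := card_DU hUD hdisj
  rcases eq_or_ne v 0 with rfl | h0
  · rw [pos_zero]; omega
  rcases eq_or_ne v (n + 2) with rfl | h2
  · rw [pos_top]; omega
  rcases classify (v := v) hUD (by omega) (by omega) with hv' | hv'
  · have := pos_D_le hUD hv'; omega
  · exact (pos_U_le hUD hdisj hv').2

lemma pos_mono_D (hUD : D ∪ U = Finset.Icc 1 (n + 1)) {x y : ℕ}
    (hx : DSide n D x) (hy : DSide n D y) (hxy : x < y) :
    pos n D U x < pos n D U y := by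
  rcases hx with rfl | hx | rfl <;> rcases hy with rfl | hy | rfl
  · omega
  · rw [pos_zero, pos_D hUD hy]; omega
  · rw [pos_zero, pos_top]; omega
  · have := (mem_D_bd hUD hx).1; omega
  · rw [pos_D hUD hx, pos_D hUD hy]
    have hsub : D.filter (fun d => d < x) ⊆ D.filter (fun d => d < y) := by
      intro d hd
      simp only [Finset.mem_filter] at *
      exact ⟨hd.1, hd.2.trans hxy⟩
    have hss : D.filter (fun d => d < x) ⊂ D.filter (fun d => d < y) := by
      refine (Finset.ssubset_iff_of_subset hsub).mpr ⟨x, ?_, by simp⟩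
      exact Finset.mem_filter.mpr ⟨hx, hxy⟩
    have := Finset.card_lt_card hss
    omega
  · rw [pos_top]
    have := pos_D_le hUD hx; omega
  · omega
  · have := (mem_D_bd hUD hy).2; omega
  · omega

lemma pos_anti_U (hUD : D ∪ U = Finset.Icc 1 (n + 1)) (hdisj : Disjoint D U)
    {x y : ℕ} (hx : x ∈ U) (hy : y ∈ U) (hxy : x < y) :
    pos n D U y < pos n D U x := by
  rw [pos_U hUD hdisj hx, pos_U hUD hdisj hy]
  have hsub : U.filter (fun u => y < u) ⊆ U.filter (fun u => x < u) := by
    intro u hu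
    simp only [Finset.mem_filter] at *
    exact ⟨hu.1, hxy.trans hu.2⟩
  have hss : U.filter (fun u => y < u) ⊂ U.filter (fun u => x < u) := by
    refine (Finset.ssubset_iff_of_subset hsub).mpr ⟨y, ?_, by simp⟩
    exact Finset.mem_filter.mpr ⟨hy, hxy⟩
  have := Finset.card_lt_card hss
  omega

lemma pos_cross (hUD : D ∪ U = Finset.Icc 1 (n + 1)) (hdisj : Disjoint D U)
    {x y : ℕ} (hx : DSide n D x) (hy : y ∈ U) :
    pos n D U x < pos n D U y := by
  have h1 := pos_dside_le hUD hdisj hx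
  have h2 := (pos_U_le hUD hdisj hy).1
  omega

lemma pos_lt_iff_D (hUD : D ∪ U = Finset.Icc 1 (n + 1)) {x y : ℕ}
    (hx : DSide n D x) (hy : DSide n D y) :
    (pos n D U x < pos n D U y ↔ x < y) := by
  constructor
  · intro h
    by_contra hc
    push_neg at hc
    rcases eq_or_lt_of_le hc with rfl | hlt
    · exact lt_irrefl _ h
    · exact absurd (pos_mono_D hUD hy hx hlt) (by omega)
  · exact pos_mono_D hUD hx hy

lemma pos_lt_iff_U (hUD : D ∪ U = Finset.Icc 1 (n + 1)) (hdisj : Disjoint D U)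
    {x y : ℕ} (hx : x ∈ U) (hy : y ∈ U) :
    (pos n D U x < pos n D U y ↔ y < x) := by
  constructor
  · intro h
    by_contra hc
    push_neg at hc
    rcases eq_or_lt_of_le hc with rfl | hlt
    · exact lt_irrefl _ h
    · exact absurd (pos_anti_U hUD hdisj hx hy hlt) (by omega)
  · exact pos_anti_U hUD hdisj hy hx

lemma relpos_of_le {a b : ℕ} (h : pos n D U a ≤ pos n D U b)
    (hb : pos n D U b ≤ n + 2) :
    relpos n D U a b = pos n D U b - pos n D U a := by
  have heq : pos n D U b + (n + 3) - pos n D U a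
      = (pos n D U b - pos n D U a) + (n + 3) := by omega
  rw [relpos, heq, Nat.add_mod_right, Nat.mod_eq_of_lt (by omega)]

lemma relpos_of_gt {a b : ℕ} (h : pos n D U b < pos n D U a)
    (ha : pos n D U a ≤ n + 2) :
    relpos n D U a b = pos n D U b + (n + 3) - pos n D U a := by
  rw [relpos, Nat.mod_eq_of_lt (by omega)]

lemma strictBetween_iff {a b v : ℕ} (hv : v ≤ n + 2)
    (ha : pos n D U a ≤ n + 2) (hb : pos n D U b ≤ n + 2)
    (hvp : pos n D U v ≤ n + 2) :
    StrictBetween n D U a b v ↔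
      ((pos n D U a < pos n D U v ∧ pos n D U v < pos n D U b) ∨
       (pos n D U b < pos n D U a ∧ pos n D U a < pos n D U v) ∨
       (pos n D U b < pos n D U a ∧ pos n D U v < pos n D U b)) := by
  unfold StrictBetween
  set pa := pos n D U a with hpa
  set pb := pos n D U b with hpb
  set pv := pos n D U v with hpv
  rcases le_or_gt pa pv with h1 | h1 <;> rcases le_or_gt pa pb with h2 | h2
  · rw [relpos_of_le h1 hvp, relpos_of_le h2 hb]; omega
  · rw [relpos_of_le h1 hvp, relpos_of_gt h2 ha]; omega
  · rw [relpos_of_gt h1 ha, relpos_of_le h2 hb]; omega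
  · rw [relpos_of_gt h1 ha, relpos_of_gt h2 ha]; omega

lemma mem_Bel_iff (hUD : D ∪ U = Finset.Icc 1 (n + 1)) (hdisj : Disjoint D U)
    {a b j : ℕ} (hab : a < b) (hb2 : b ≤ n + 2) (hj : j ∈ Finset.Icc 1 (n + 1)) :
    (j ∈ Bel n D U (a, b) ↔
      (j ∈ D ∧ (a ∈ U ∨ a < j) ∧ (b ∈ U ∨ j < b)) ∨
      (j ∈ U ∧ ((a ∈ U ∧ j ≤ a) ∨ (b ∈ U ∧ b ≤ j)))) := by
  rw [Finset.mem_Icc] at hj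
  have hja : j ≤ n + 2 := by omega
  have hpa : pos n D U a ≤ n + 2 := pos_le hUD hdisj (by omega)
  have hpb : pos n D U b ≤ n + 2 := pos_le hUD hdisj hb2
  have hpj : pos n D U j ≤ n + 2 := pos_le hUD hdisj hja
  have hBel : j ∈ Bel n D U (a, b) ↔
      (StrictBetween n D U a b j ∨ (j ∈ U ∧ (j = a ∨ j = b))) := by
    unfold Bel
    rw [Finset.mem_filter, Finset.mem_Icc]
    constructor
    · exact fun h => h.2
    · exact fun h => ⟨hj, h⟩
  rw [hBel, strictBetween_iff hja hpa hpb hpj]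
  -- classify a, b, j
  have hcA : DSide n D a ∨ a ∈ U := by
    rcases eq_or_ne a 0 with rfl | h0
    · exact Or.inl (Or.inl rfl)
    rcases classify (v := a) hUD (by omega) (by omega) with h | h
    · exact Or.inl (Or.inr (Or.inl h))
    · exact Or.inr h
  have hcB : DSide n D b ∨ b ∈ U := by
    rcases eq_or_ne b (n + 2) with rfl | h2
    · exact Or.inl (Or.inr (Or.inr rfl))
    rcases classify (v := b) hUD (by omega) (by omega) with h | h
    · exact Or.inl (Or.inr (Or.inl h))
    · exact Or.inr h
  have hcJ : j ∈ D ∨ j ∈ U := classify (v := j) hUD (by omega) (by omega)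
  rcases hcJ with hJ | hJ
  all_goals rcases hcA with hA | hA
  all_goals rcases hcB with hB | hB
  · -- a Dside, b Dside, j ∈ D
    have hjU : j ∉ U := dside_not_U hUD hdisj (Or.inr (Or.inl hJ))
    have haU : a ∉ U := dside_not_U hUD hdisj hA
    have hbU : b ∉ U := dside_not_U hUD hdisj hB
    have e1 := pos_lt_iff_D (U := U) hUD hA (Or.inr (Or.inl hJ))
    have e2 := pos_lt_iff_D (U := U) hUD (Or.inr (Or.inl hJ)) hB
    have e3 := pos_lt_iff_D (U := U) hUD hB hA
    simp only [hJ, hjU, haU, hbU, iff_true, iff_false, true_and, false_and,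
      and_true, and_false, true_or, or_true, false_or, or_false, not_false_iff, or_self]
    omega
  · -- a Dside, b ∈ U, j ∈ D
    have hjU : j ∉ U := dside_not_U hUD hdisj (Or.inr (Or.inl hJ))
    have haU : a ∉ U := dside_not_U hUD hdisj hA
    have e1 := pos_lt_iff_D (U := U) hUD hA (Or.inr (Or.inl hJ))
    have e2 : pos n D U j < pos n D U b := pos_cross hUD hdisj (Or.inr (Or.inl hJ)) hB
    have e3 : pos n D U a < pos n D U b := pos_cross hUD hdisj hA hB
    simp only [hJ, hjU, haU, hB, iff_true, iff_false, true_and, false_and,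
      and_true, and_false, true_or, or_true, false_or, or_false, not_false_iff, or_self]
    omega
  · -- a ∈ U, b Dside, j ∈ D
    have hjU : j ∉ U := dside_not_U hUD hdisj (Or.inr (Or.inl hJ))
    have hbU : b ∉ U := dside_not_U hUD hdisj hB
    have e1 : pos n D U j < pos n D U a := pos_cross hUD hdisj (Or.inr (Or.inl hJ)) hA
    have e2 := pos_lt_iff_D (U := U) hUD (Or.inr (Or.inl hJ)) hB
    have e3 : pos n D U b < pos n D U a := pos_cross hUD hdisj hB hA
    simp only [hJ, hjU, hbU, hA, iff_true, iff_false, true_and, false_and,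
      and_true, and_false, true_or, or_true, false_or, or_false, not_false_iff, or_self]
    omega
  · -- a ∈ U, b ∈ U, j ∈ D
    have hjU : j ∉ U := dside_not_U hUD hdisj (Or.inr (Or.inl hJ))
    have e1 : pos n D U j < pos n D U a := pos_cross hUD hdisj (Or.inr (Or.inl hJ)) hA
    have e2 : pos n D U j < pos n D U b := pos_cross hUD hdisj (Or.inr (Or.inl hJ)) hB
    have e3 : pos n D U b < pos n D U a := pos_anti_U hUD hdisj hA hB hab
    simp only [hJ, hjU, hA, hB, iff_true, iff_false, true_and, false_and,
      and_true, and_false, true_or, or_true, false_or, or_false, not_false_iff, or_self]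
    omega
  · -- a Dside, b Dside, j ∈ U
    have hjD : j ∉ D := fun h => Finset.disjoint_left.mp hdisj h hJ
    have haU : a ∉ U := dside_not_U hUD hdisj hA
    have hbU : b ∉ U := dside_not_U hUD hdisj hB
    have hjna : j ≠ a := fun h => haU (h ▸ hJ)
    have hjnb : j ≠ b := fun h => hbU (h ▸ hJ)
    have e1 : pos n D U a < pos n D U j := pos_cross hUD hdisj hA hJ
    have e2 : pos n D U b < pos n D U j := pos_cross hUD hdisj hB hJ
    have e3 := pos_lt_iff_D (U := U) hUD hB hA
    simp only [hJ, hjD, haU, hbU, iff_true, iff_false, true_and, false_and,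
      and_true, and_false, true_or, or_true, false_or, or_false, not_false_iff, or_self]
    omega
  · -- a Dside, b ∈ U, j ∈ U
    have hjD : j ∉ D := fun h => Finset.disjoint_left.mp hdisj h hJ
    have haU : a ∉ U := dside_not_U hUD hdisj hA
    have hjna : j ≠ a := fun h => haU (h ▸ hJ)
    have e1 : pos n D U a < pos n D U j := pos_cross hUD hdisj hA hJ
    have e2 := pos_lt_iff_U hUD hdisj hJ hB
    have e3 : pos n D U a < pos n D U b := pos_cross hUD hdisj hA hB
    simp only [hJ, hjD, haU, hB, iff_true, iff_false, true_and, false_and,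
      and_true, and_false, true_or, or_true, false_or, or_false, not_false_iff, or_self]
    omega
  · -- a ∈ U, b Dside, j ∈ U
    have hjD : j ∉ D := fun h => Finset.disjoint_left.mp hdisj h hJ
    have hbU : b ∉ U := dside_not_U hUD hdisj hB
    have hjnb : j ≠ b := fun h => hbU (h ▸ hJ)
    have e1 := pos_lt_iff_U hUD hdisj hA hJ
    have e2 : pos n D U b < pos n D U j := pos_cross hUD hdisj hB hJ
    have e3 : pos n D U b < pos n D U a := pos_cross hUD hdisj hB hA
    simp only [hJ, hjD, hbU, hA, iff_true, iff_false, true_and, false_and,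
      and_true, and_false, true_or, or_true, false_or, or_false, not_false_iff, or_self]
    omega
  · -- a ∈ U, b ∈ U, j ∈ U
    have hjD : j ∉ D := fun h => Finset.disjoint_left.mp hdisj h hJ
    have e1 := pos_lt_iff_U hUD hdisj hA hJ
    have e2 := pos_lt_iff_U hUD hdisj hJ hB
    have e3 : pos n D U b < pos n D U a := pos_anti_U hUD hdisj hA hB hab
    simp only [hJ, hjD, hA, hB, iff_true, iff_false, true_and, false_and,
      and_true, and_false, true_or, or_true, false_or, or_false, not_false_iff, or_self]
    omega


end Aux

/-- For any diagonal `δ` of `P` (internal or boundary) and any label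
`j ∈ [n+1]`: if `j ∈ D ∩ Abo(δ)` then `{1,…,j} ⊆ Abo(δ)` or `{j,…,n+1} ⊆ Abo(δ)`;
and if `j ∈ U ∩ Bel(δ)` then `{1,…,j} ⊆ Bel(δ)` or `{j,…,n+1} ⊆ Bel(δ)`. -/
theorem down_abo_up_bel_interval (n : ℕ) (hn : 1 ≤ n) (D U : Finset ℕ)
    (hUD : D ∪ U = Finset.Icc 1 (n + 1)) (hdisj : Disjoint D U)
    (δ : ℕ × ℕ) (hδ : IsDiag n δ) (j : ℕ) (hj : j ∈ Finset.Icc 1 (n + 1)) :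
    (j ∈ D → j ∈ Abo n D U δ →
      (Finset.Icc 1 j ⊆ Abo n D U δ ∨ Finset.Icc j (n + 1) ⊆ Abo n D U δ)) ∧
    (j ∈ U → j ∈ Bel n D U δ →
      (Finset.Icc 1 j ⊆ Bel n D U δ ∨ Finset.Icc j (n + 1) ⊆ Bel n D U δ)) := by
  obtain ⟨a, b⟩ := δ
  have hab : a < b := hδ.1
  have hb2 : b ≤ n + 2 := hδ.2
  rw [Finset.mem_Icc] at hj
  have key : ∀ i, 1 ≤ i → i ≤ n + 1 →
      (i ∈ Bel n D U (a, b) ↔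
        (i ∈ D ∧ (a ∈ U ∨ a < i) ∧ (b ∈ U ∨ i < b)) ∨
        (i ∈ U ∧ ((a ∈ U ∧ i ≤ a) ∨ (b ∈ U ∧ b ≤ i)))) := fun i h1 h2 =>
    mem_Bel_iff hUD hdisj hab hb2 (Finset.mem_Icc.mpr ⟨h1, h2⟩)
  have memAbo : ∀ i, 1 ≤ i → i ≤ n + 1 →
      (i ∈ Abo n D U (a, b) ↔ i ∉ Bel n D U (a, b)) := by
    intro i h1 h2
    unfold Abo
    rw [Finset.mem_sdiff, Finset.mem_Icc]
    constructor
    · exact fun h => h.2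
    · exact fun h => ⟨⟨h1, h2⟩, h⟩
  constructor
  · -- down part
    intro hjD hjAbo
    have hjU : j ∉ U := fun h => Finset.disjoint_left.mp hdisj hjD h
    have hjnB : j ∉ Bel n D U (a, b) := (memAbo j hj.1 hj.2).mp hjAbo
    rw [key j hj.1 hj.2] at hjnB
    have hsplit : (a ∉ U ∧ j ≤ a) ∨ (b ∉ U ∧ b ≤ j) := by
      by_contra hc
      push_neg at hc
      apply hjnB
      refine Or.inl ⟨hjD, ?_, ?_⟩
      · by_cases h : a ∈ U
        · exact Or.inl h
        · exact Or.inr (hc.1 h)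
      · by_cases h : b ∈ U
        · exact Or.inl h
        · exact Or.inr (hc.2 h)
    rcases hsplit with ⟨haU, hja⟩ | ⟨hbU, hbj⟩
    · left
      intro i hi
      rw [Finset.mem_Icc] at hi
      have hi2 : i ≤ n + 1 := by omega
      rw [memAbo i hi.1 hi2, key i hi.1 hi2]
      rintro (⟨hiD, h1, h2⟩ | ⟨hiU, h3⟩)
      · rcases h1 with h | h
        · exact haU h
        · omega
      · rcases h3 with ⟨h, _⟩ | ⟨_, h⟩
        · exact haU h
        · omega
    · right
      intro i hi
      rw [Finset.mem_Icc] at hi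
      have hi1 : 1 ≤ i := by omega
      rw [memAbo i hi1 hi.2, key i hi1 hi.2]
      rintro (⟨hiD, h1, h2⟩ | ⟨hiU, h3⟩)
      · rcases h2 with h | h
        · exact hbU h
        · omega
      · rcases h3 with ⟨_, h⟩ | ⟨h, _⟩
        · omega
        · exact hbU h
  · -- up part
    intro hjU hjBel
    rw [key j hj.1 hj.2] at hjBel
    have hjD : j ∉ D := fun h => Finset.disjoint_left.mp hdisj h hjU
    have hsplit : (a ∈ U ∧ j ≤ a) ∨ (b ∈ U ∧ b ≤ j) := by
      rcases hjBel with ⟨h, _⟩ | ⟨_, h⟩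
      · exact absurd h hjD
      · exact h
    rcases hsplit with ⟨haU, hja⟩ | ⟨hbU, hbj⟩
    · left
      intro i hi
      rw [Finset.mem_Icc] at hi
      have hi2 : i ≤ n + 1 := by omega
      rw [key i hi.1 hi2]
      have hia : i ≤ a := le_trans hi.2 hja
      rcases classify hUD hi.1 hi2 with hiD | hiU
      · exact Or.inl ⟨hiD, Or.inl haU, Or.inr (by omega)⟩
      · exact Or.inr ⟨hiU, Or.inl ⟨haU, hia⟩⟩
    · right
      intro i hi
      rw [Finset.mem_Icc] at hi
      have hi1 : 1 ≤ i := by omega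
      rw [key i hi1 hi.2]
      have hbi : b ≤ i := le_trans hbj hi.1
      rcases classify hUD hi1 hi.2 with hiD | hiU
      · exact Or.inl ⟨hiD, Or.inr (by omega), Or.inl hbU⟩
      · exact Or.inr ⟨hiU, Or.inr ⟨hbU, hbi⟩⟩

end Spines
end
end

section
/- Let T and T̃ be triangulations of P related by a flip, with internal diagonals δ ∈ T and δ̃ ∈ T̃ such that δ ≠ δ̃ and T ∖ {δ} = T̃ ∖ {δ̃}. Let (i,j) := (s_δ, t_δ) be the spine arc of δ in T. Then the spine arc of δ̃ in T̃ is (s_δ̃, t_δ̃) = (j,i), and there exists a real number α > 0 such that x(T̃) − x(T) = α·(e_i − e_j), where e_1,…,e_{n+1} is the standard basis of ℝ^{n+1}. -/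
attribute [local instance] Classical.propDecidable

noncomputable section

namespace Spines

section Basic

variable {n : ℕ} {D U : Finset ℕ}

lemma mem_D_bounds (hUD : D ∪ U = Finset.Icc 1 (n + 1)) {j : ℕ} (hj : j ∈ D) :
    1 ≤ j ∧ j ≤ n + 1 := by
  have : j ∈ D ∪ U := Finset.mem_union_left _ hj
  rw [hUD, Finset.mem_Icc] at this; exact this

lemma mem_U_bounds (hUD : D ∪ U = Finset.Icc 1 (n + 1)) {j : ℕ} (hj : j ∈ U) :
    1 ≤ j ∧ j ≤ n + 1 := by
  have : j ∈ D ∪ U := Finset.mem_union_right _ hj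
  rw [hUD, Finset.mem_Icc] at this; exact this

lemma vertex_cases (hUD : D ∪ U = Finset.Icc 1 (n + 1)) {v : ℕ} (hv : v ≤ n + 2) :
    v = 0 ∨ v = n + 2 ∨ v ∈ D ∨ v ∈ U := by
  by_cases h0 : v = 0
  · exact Or.inl h0
  by_cases h2 : v = n + 2
  · exact Or.inr (Or.inl h2)
  have : v ∈ D ∪ U := by rw [hUD, Finset.mem_Icc]; omega
  rw [Finset.mem_union] at this
  exact Or.inr (Or.inr this)

lemma pos_memD (hUD : D ∪ U = Finset.Icc 1 (n + 1)) {j : ℕ} (hj : j ∈ D) :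
    pos n D U j = 1 + (D.filter (fun d => d < j)).card := by
  have hb := mem_D_bounds hUD hj
  rw [pos, if_neg (by omega), if_neg (by omega), if_pos hj]

lemma pos_memU (hUD : D ∪ U = Finset.Icc 1 (n + 1)) (hdisj : Disjoint D U)
    {j : ℕ} (hj : j ∈ U) :
    pos n D U j = D.card + 2 + (U.filter (fun u => j < u)).card := by
  have hb := mem_U_bounds hUD hj
  have hjD : j ∉ D := fun h => (Finset.disjoint_left.mp hdisj h) hj
  rw [pos, if_neg (by omega), if_neg (by omega), if_neg hjD]

lemma filter_card_lt_of_mem {s : Finset ℕ} {j : ℕ} (hj : j ∈ s)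
    {p : ℕ → Prop} [DecidablePred p] (hp : ¬ p j) :
    (s.filter p).card < s.card := by
  refine Finset.card_lt_card ?_
  rw [Finset.ssubset_iff_of_subset (Finset.filter_subset _ _)]
  exact ⟨j, hj, by simp [hp]⟩

lemma filter_lt_strict {s : Finset ℕ} {j v : ℕ} (hj : j ∈ s) (hjv : j < v) :
    (s.filter (fun d => d < j)).card < (s.filter (fun d => d < v)).card := by
  have h1 : insert j (s.filter (fun d => d < j)) ⊆ s.filter (fun d => d < v) := by
    intro x hx
    rcases Finset.mem_insert.mp hx with rfl | hx
    · exact Finset.mem_filter.mpr ⟨hj, hjv⟩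
    · rcases Finset.mem_filter.mp hx with ⟨h2, h3⟩
      exact Finset.mem_filter.mpr ⟨h2, by omega⟩
  have h2 : j ∉ s.filter (fun d => d < j) := by simp
  have := Finset.card_le_card h1
  rw [Finset.card_insert_of_notMem h2] at this
  omega

lemma filter_gt_strict {s : Finset ℕ} {j v : ℕ} (hj : j ∈ s) (hjv : v < j) :
    (s.filter (fun d => j < d)).card < (s.filter (fun d => v < d)).card := by
  have h1 : insert j (s.filter (fun d => j < d)) ⊆ s.filter (fun d => v < d) := by
    intro x hx
    rcases Finset.mem_insert.mp hx with rfl | hx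
    · exact Finset.mem_filter.mpr ⟨hj, hjv⟩
    · rcases Finset.mem_filter.mp hx with ⟨h2, h3⟩
      exact Finset.mem_filter.mpr ⟨h2, by omega⟩
  have h2 : j ∉ s.filter (fun d => j < d) := by simp
  have := Finset.card_le_card h1
  rw [Finset.card_insert_of_notMem h2] at this
  omega

lemma filter_lt_card_le_add {s : Finset ℕ} {j v : ℕ} (h : j ≤ v) :
    (s.filter (fun d => d < v)).card ≤ (s.filter (fun d => d < j)).card + (v - j) := by
  have h1 : s.filter (fun d => d < v) ⊆ s.filter (fun d => d < j) ∪ Finset.Ico j v := by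
    intro x hx
    rcases Finset.mem_filter.mp hx with ⟨h2, h3⟩
    rw [Finset.mem_union, Finset.mem_filter, Finset.mem_Ico]
    by_cases h4 : x < j
    · exact Or.inl ⟨h2, h4⟩
    · exact Or.inr (by omega)
  calc (s.filter (fun d => d < v)).card
      ≤ (s.filter (fun d => d < j) ∪ Finset.Ico j v).card := Finset.card_le_card h1
    _ ≤ (s.filter (fun d => d < j)).card + (Finset.Ico j v).card :=
        Finset.card_union_le _ _
    _ = (s.filter (fun d => d < j)).card + (v - j) := by rw [Nat.card_Ico]

lemma filter_gt_card_le_add {s : Finset ℕ} {j v : ℕ} (h : v ≤ j) :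
    (s.filter (fun d => v < d)).card ≤ (s.filter (fun d => j < d)).card + (j - v) := by
  have h1 : s.filter (fun d => v < d) ⊆ s.filter (fun d => j < d) ∪ Finset.Ioc v j := by
    intro x hx
    rcases Finset.mem_filter.mp hx with ⟨h2, h3⟩
    rw [Finset.mem_union, Finset.mem_filter, Finset.mem_Ioc]
    by_cases h4 : j < x
    · exact Or.inl ⟨h2, h4⟩
    · exact Or.inr (by omega)
  calc (s.filter (fun d => v < d)).card
      ≤ (s.filter (fun d => j < d) ∪ Finset.Ioc v j).card := Finset.card_le_card h1
    _ ≤ (s.filter (fun d => j < d)).card + (Finset.Ioc v j).card :=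
        Finset.card_union_le _ _
    _ = (s.filter (fun d => j < d)).card + (j - v) := by rw [Nat.card_Ioc]

lemma filter_count_lt (hUD : D ∪ U = Finset.Icc 1 (n + 1)) (hdisj : Disjoint D U)
    (x : ℕ) :
    (D.filter (fun d => d < x)).card + (U.filter (fun d => d < x)).card
      = min (x - 1) (n + 1) := by
  rw [← Finset.card_union_of_disjoint
      (Finset.disjoint_filter_filter hdisj), ← Finset.filter_union, hUD]
  have : (Finset.Icc 1 (n + 1)).filter (fun d => d < x)
      = Finset.Icc 1 (min (x - 1) (n + 1)) := by
    ext z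
    simp only [Finset.mem_filter, Finset.mem_Icc]
    omega
  rw [this, Nat.card_Icc]
  omega

lemma filter_count_gt (hUD : D ∪ U = Finset.Icc 1 (n + 1)) (hdisj : Disjoint D U)
    (x : ℕ) :
    (D.filter (fun d => x < d)).card + (U.filter (fun d => x < d)).card
      = n + 1 - x := by
  rw [← Finset.card_union_of_disjoint
      (Finset.disjoint_filter_filter hdisj), ← Finset.filter_union, hUD]
  have : (Finset.Icc 1 (n + 1)).filter (fun d => x < d)
      = Finset.Icc (max 1 (x + 1)) (n + 1) := by
    ext z
    simp only [Finset.mem_filter, Finset.mem_Icc]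
    omega
  rw [this, Nat.card_Icc]
  omega

lemma pos_memD_range (hUD : D ∪ U = Finset.Icc 1 (n + 1)) {j : ℕ} (hj : j ∈ D) :
    1 ≤ pos n D U j ∧ pos n D U j ≤ D.card := by
  rw [pos_memD hUD hj]
  have := filter_card_lt_of_mem (p := fun d => d < j) hj (by omega)
  omega

lemma pos_memU_range (hUD : D ∪ U = Finset.Icc 1 (n + 1)) (hdisj : Disjoint D U)
    {j : ℕ} (hj : j ∈ U) :
    D.card + 2 ≤ pos n D U j ∧ pos n D U j ≤ n + 2 := by
  rw [pos_memU hUD hdisj hj]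
  have h1 := filter_card_lt_of_mem (p := fun d => j < d) hj (by omega)
  have h2 := card_DU hUD hdisj
  omega

lemma pos_inj (hUD : D ∪ U = Finset.Icc 1 (n + 1)) (hdisj : Disjoint D U)
    {v w : ℕ} (hv : v ≤ n + 2) (hw : w ≤ n + 2)
    (h : pos n D U v = pos n D U w) : v = w := by
  have hc := card_DU hUD hdisj
  rcases vertex_cases hUD hv with rfl | rfl | h1 | h1 <;>
    rcases vertex_cases hUD hw with rfl | rfl | h2 | h2
  · rfl
  · rw [pos_zero, pos_top] at h; omega
  · rw [pos_zero] at h; have := pos_memD_range hUD h2; omega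
  · rw [pos_zero] at h; have := pos_memU_range hUD hdisj h2; omega
  · rw [pos_zero, pos_top] at h; omega
  · rfl
  · rw [pos_top] at h; have := pos_memD_range hUD h2; omega
  · rw [pos_top] at h; have := pos_memU_range hUD hdisj h2; omega
  · rw [pos_zero] at h; have := pos_memD_range hUD h1; omega
  · rw [pos_top] at h; have := pos_memD_range hUD h1; omega
  · rcases lt_trichotomy v w with hlt | heq | hlt
    · exfalso
      have := filter_lt_strict h1 hlt
      rw [pos_memD hUD h1, pos_memD hUD h2] at h
      omega
    · exact heq
    · exfalso
      have := filter_lt_strict h2 hlt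
      rw [pos_memD hUD h1, pos_memD hUD h2] at h
      omega
  · have ha := pos_memD_range hUD h1
    have hb := pos_memU_range hUD hdisj h2
    omega
  · rw [pos_zero] at h; have := pos_memU_range hUD hdisj h1; omega
  · rw [pos_top] at h; have := pos_memU_range hUD hdisj h1; omega
  · have ha := pos_memU_range hUD hdisj h1
    have hb := pos_memD_range hUD h2
    omega
  · rcases lt_trichotomy v w with hlt | heq | hlt
    · exfalso
      have := filter_gt_strict h2 hlt
      rw [pos_memU hUD hdisj h1, pos_memU hUD hdisj h2] at h
      omega
    · exact heq
    · exfalso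
      have := filter_gt_strict h1 hlt
      rw [pos_memU hUD hdisj h1, pos_memU hUD hdisj h2] at h
      omega

lemma pos_surj (hUD : D ∪ U = Finset.Icc 1 (n + 1)) (hdisj : Disjoint D U)
    {p : ℕ} (hp : p ≤ n + 2) : ∃ v, v ≤ n + 2 ∧ pos n D U v = p := by
  have himg : (Finset.range (n + 3)).image (pos n D U) = Finset.range (n + 3) := by
    apply Finset.eq_of_subset_of_card_le
    · intro x hx
      rcases Finset.mem_image.mp hx with ⟨v, hv, rfl⟩
      rw [Finset.mem_range] at hv ⊢
      have := pos_le hUD hdisj (v := v) (by omega)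
      omega
    · rw [Finset.card_image_of_injOn, Finset.card_range]
      intro x hx y hy hxy
      rw [Finset.mem_coe, Finset.mem_range] at hx hy
      exact pos_inj hUD hdisj (by omega) (by omega) hxy
  have : p ∈ (Finset.range (n + 3)).image (pos n D U) := by
    rw [himg, Finset.mem_range]; omega
  rcases Finset.mem_image.mp this with ⟨v, hv, hpv⟩
  rw [Finset.mem_range] at hv
  exact ⟨v, by omega, hpv⟩

end Basic

end Spines
namespace Spines

section Rel

variable {n : ℕ} {D U : Finset ℕ}

lemma relpos_lt_N (a v : ℕ) : relpos n D U a v < n + 3 := Nat.mod_lt _ (by omega)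

lemma mod_two_lt {x M : ℕ} (hM : 0 < M) (h : x < 2 * M) :
    x % M = if x < M then x else x - M := by
  split_ifs with h1
  · exact Nat.mod_eq_of_lt h1
  · rw [Nat.mod_eq_sub_mod (by omega)]
    exact Nat.mod_eq_of_lt (by omega)

lemma relpos_eq (hUD : D ∪ U = Finset.Icc 1 (n + 1)) (hdisj : Disjoint D U)
    {a v : ℕ} (ha : a ≤ n + 2) (hv : v ≤ n + 2) :
    relpos n D U a v = if pos n D U a ≤ pos n D U v then pos n D U v - pos n D U a
      else pos n D U v + (n + 3) - pos n D U a := by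
  have h1 := pos_le hUD hdisj ha
  have h2 := pos_le hUD hdisj hv
  rw [relpos, mod_two_lt (by omega) (by omega)]
  split_ifs <;> omega

lemma relpos_self (a : ℕ) : relpos n D U a a = 0 := by
  rw [relpos, show pos n D U a + (n + 3) - pos n D U a = n + 3 by omega, Nat.mod_self]

lemma relpos_eq_zero_iff (hUD : D ∪ U = Finset.Icc 1 (n + 1)) (hdisj : Disjoint D U)
    {a v : ℕ} (ha : a ≤ n + 2) (hv : v ≤ n + 2) :
    relpos n D U a v = 0 ↔ v = a := by
  constructor
  · intro h
    rw [relpos_eq hUD hdisj ha hv] at h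
    have h1 := pos_le hUD hdisj ha
    have h2 := pos_le hUD hdisj hv
    refine pos_inj hUD hdisj hv ha ?_
    split_ifs at h <;> omega
  · rintro rfl; exact relpos_self _

lemma relpos_inj_iff (hUD : D ∪ U = Finset.Icc 1 (n + 1)) (hdisj : Disjoint D U)
    {a x y : ℕ} (ha : a ≤ n + 2) (hx : x ≤ n + 2) (hy : y ≤ n + 2) :
    relpos n D U a x = relpos n D U a y ↔ x = y := by
  constructor
  · intro h
    rw [relpos_eq hUD hdisj ha hx, relpos_eq hUD hdisj ha hy] at h
    have h1 := pos_le hUD hdisj ha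
    have h2 := pos_le hUD hdisj hx
    have h3 := pos_le hUD hdisj hy
    refine pos_inj hUD hdisj hx hy ?_
    split_ifs at h <;> omega
  · rintro rfl; rfl

lemma relpos_shift (hUD : D ∪ U = Finset.Icc 1 (n + 1)) (hdisj : Disjoint D U)
    {a b v : ℕ} (ha : a ≤ n + 2) (hb : b ≤ n + 2) (hv : v ≤ n + 2) :
    relpos n D U b v = if relpos n D U a b ≤ relpos n D U a v
      then relpos n D U a v - relpos n D U a b
      else relpos n D U a v + (n + 3) - relpos n D U a b := by
  rw [relpos_eq hUD hdisj hb hv, relpos_eq hUD hdisj ha hv, relpos_eq hUD hdisj ha hb]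
  have h1 := pos_le hUD hdisj ha
  have h2 := pos_le hUD hdisj hb
  have h3 := pos_le hUD hdisj hv
  split_ifs <;> omega

/-- Master lemma: any `StrictBetween` statement in terms of relative positions from
a fixed base vertex `a`. -/
lemma SB_base (hUD : D ∪ U = Finset.Icc 1 (n + 1)) (hdisj : Disjoint D U)
    {a x y z : ℕ} (ha : a ≤ n + 2) (hx : x ≤ n + 2) (hy : y ≤ n + 2) (hz : z ≤ n + 2) :
    StrictBetween n D U x y z ↔
      (relpos n D U a x < relpos n D U a z ∧ relpos n D U a z < relpos n D U a y) ∨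
      (relpos n D U a y < relpos n D U a x ∧ relpos n D U a x < relpos n D U a z) ∨
      (relpos n D U a z < relpos n D U a y ∧ relpos n D U a y < relpos n D U a x) := by
  unfold StrictBetween
  rw [relpos_shift hUD hdisj ha hx hz, relpos_shift hUD hdisj ha hx hy]
  have h1 := relpos_lt_N (n := n) (D := D) (U := U) a x
  have h2 := relpos_lt_N (n := n) (D := D) (U := U) a y
  have h3 := relpos_lt_N (n := n) (D := D) (U := U) a z
  constructor
  · rintro ⟨-, hp, hq⟩
    split_ifs at hp hq <;> omega
  · intro h
    refine ⟨hz, ?_, ?_⟩ <;> split_ifs <;> omega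

lemma filter_gt_mono {s : Finset ℕ} {j v : ℕ} (h : v ≤ j) :
    (s.filter (fun d => j < d)).card ≤ (s.filter (fun d => v < d)).card := by
  apply Finset.card_le_card
  intro x hx
  rcases Finset.mem_filter.mp hx with ⟨h1, h2⟩
  exact Finset.mem_filter.mpr ⟨h1, by omega⟩

/-- Block lemma for down labels: going counterclockwise from `j ∈ D`, all vertices
numerically greater than `j` come before all vertices numerically smaller. -/
lemma block_D (hUD : D ∪ U = Finset.Icc 1 (n + 1)) (hdisj : Disjoint D U)
    {j v : ℕ} (hj : j ∈ D) (hv : v ≤ n + 2) :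
    (j < v → relpos n D U j v ≤ n + 2 - j) ∧ (v < j → n + 3 - j ≤ relpos n D U j v) := by
  have hjb := mem_D_bounds hUD hj
  have hc := card_DU hUD hdisj
  have hposj := pos_memD hUD hj
  have hcntj := filter_count_lt hUD hdisj j
  have hcgtj := filter_count_gt hUD hdisj j
  have hdsplit : (D.filter (fun d => d < j)).card + (D.filter (fun d => j < d)).card + 1
      = D.card := by
    have h1 := Finset.card_filter_add_card_filter_not (s := D)
      (p := fun d => d < j)
    have h2 : D.filter (fun d => ¬ d < j) = insert j (D.filter (fun d => j < d)) := by
      ext x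
      simp only [Finset.mem_filter, Finset.mem_insert, not_lt]
      constructor
      · rintro ⟨hxs, hx⟩
        rcases Nat.eq_or_lt_of_le hx with h | h
        · exact Or.inl h.symm
        · exact Or.inr ⟨hxs, h⟩
      · rintro (rfl | ⟨hxs, hx⟩)
        · exact ⟨hj, le_refl _⟩
        · exact ⟨hxs, by omega⟩
    rw [h2, Finset.card_insert_of_notMem (by simp)] at h1
    omega
  rw [relpos_eq hUD hdisj (by omega) hv]
  constructor
  · intro hjv
    rcases vertex_cases hUD hv with rfl | rfl | h | h
    · omega
    · rw [pos_top]; split_ifs <;> omega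
    · rw [pos_memD hUD h]
      have h1 := filter_lt_strict hj hjv
      have h2 := filter_lt_card_le_add (s := D) (le_of_lt hjv)
      have h3 := mem_D_bounds hUD h
      split_ifs <;> omega
    · rw [pos_memU hUD hdisj h]
      have h1 := filter_gt_strict h hjv
      have h2 := filter_count_gt hUD hdisj v
      have h3 := mem_U_bounds hUD h
      split_ifs <;> omega
  · intro hjv
    rcases vertex_cases hUD hv with rfl | rfl | h | h
    · rw [pos_zero]; split_ifs <;> omega
    · omega
    · rw [pos_memD hUD h]
      have h1 := filter_lt_strict h hjv
      have h2 := filter_lt_card_le_add (s := D) (le_of_lt hjv)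
      have h3 := mem_D_bounds hUD h
      split_ifs <;> omega
    · rw [pos_memU hUD hdisj h]
      have h1 := filter_gt_strict hj hjv
      have h2 := filter_gt_mono (s := U) (le_of_lt hjv)
      have h3 := mem_U_bounds hUD h
      split_ifs <;> omega

/-- Block lemma for up labels. -/
lemma block_U (hUD : D ∪ U = Finset.Icc 1 (n + 1)) (hdisj : Disjoint D U)
    {j v : ℕ} (hj : j ∈ U) (hv : v ≤ n + 2) :
    (v < j → relpos n D U j v ≤ j) ∧ (j < v → j + 1 ≤ relpos n D U j v) := by
  have hjb := mem_U_bounds hUD hj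
  have hc := card_DU hUD hdisj
  have hposj := pos_memU hUD hdisj hj
  have hcntj := filter_count_lt hUD hdisj j
  have hcgtj := filter_count_gt hUD hdisj j
  have hcle := Finset.card_filter_le D (fun d => j < d)
  rw [relpos_eq hUD hdisj (by omega) hv]
  constructor
  · intro hjv
    rcases vertex_cases hUD hv with rfl | rfl | h | h
    · rw [pos_zero]; split_ifs <;> omega
    · omega
    · rw [pos_memD hUD h]
      have h3 := mem_D_bounds hUD h
      have hdsplit : (D.filter (fun d => d < v)).card + (D.filter (fun d => v < d)).card + 1
          = D.card := by
        have h1 := Finset.card_filter_add_card_filter_not (s := D)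
          (p := fun d => d < v)
        have h2 : D.filter (fun d => ¬ d < v) = insert v (D.filter (fun d => v < d)) := by
          ext x
          simp only [Finset.mem_filter, Finset.mem_insert, not_lt]
          constructor
          · rintro ⟨hxs, hx⟩
            rcases Nat.eq_or_lt_of_le hx with h' | h'
            · exact Or.inl h'.symm
            · exact Or.inr ⟨hxs, h'⟩
          · rintro (rfl | ⟨hxs, hx⟩)
            · exact ⟨h, le_refl _⟩
            · exact ⟨hxs, by omega⟩
        rw [h2, Finset.card_insert_of_notMem (by simp)] at h1
        omega
      have h4 := filter_gt_mono (s := D) (le_of_lt hjv)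
      split_ifs <;> omega
    · rw [pos_memU hUD hdisj h]
      have h1 := filter_gt_strict hj hjv
      have h2 := filter_gt_card_le_add (s := U) (le_of_lt hjv)
      have h3 := mem_U_bounds hUD h
      split_ifs <;> omega
  · intro hjv
    rcases vertex_cases hUD hv with rfl | rfl | h | h
    · omega
    · rw [pos_top]; split_ifs <;> omega
    · rw [pos_memD hUD h]
      have h3 := mem_D_bounds hUD h
      have hdsplit : (D.filter (fun d => d < v)).card + (D.filter (fun d => v < d)).card + 1
          = D.card := by
        have h1 := Finset.card_filter_add_card_filter_not (s := D)
          (p := fun d => d < v)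
        have h2 : D.filter (fun d => ¬ d < v) = insert v (D.filter (fun d => v < d)) := by
          ext x
          simp only [Finset.mem_filter, Finset.mem_insert, not_lt]
          constructor
          · rintro ⟨hxs, hx⟩
            rcases Nat.eq_or_lt_of_le hx with h' | h'
            · exact Or.inl h'.symm
            · exact Or.inr ⟨hxs, h'⟩
          · rintro (rfl | ⟨hxs, hx⟩)
            · exact ⟨h, le_refl _⟩
            · exact ⟨hxs, by omega⟩
        rw [h2, Finset.card_insert_of_notMem (by simp)] at h1
        omega
      have h4 := filter_gt_strict h hjv
      split_ifs <;> omega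
    · rw [pos_memU hUD hdisj h]
      have h1 := filter_gt_strict h hjv
      have h3 := mem_U_bounds hUD h
      split_ifs <;> omega

end Rel

end Spines
namespace Spines

section CrossL

variable {n : ℕ} {D U : Finset ℕ} {T : Finset (ℕ × ℕ)}

/-- Symmetric edge relation: `{x,y}` is a diagonal of `T` or a boundary edge. -/
def ESym (n : ℕ) (D U : Finset ℕ) (T : Finset (ℕ × ℕ)) (x y : ℕ) : Prop :=
  x ≠ y ∧ x ≤ n + 2 ∧ y ≤ n + 2 ∧ EdgeOf n D U T (min x y) (max x y)

lemma esym_comm {x y : ℕ} (h : ESym n D U T x y) : ESym n D U T y x := by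
  obtain ⟨h1, h2, h3, h4⟩ := h
  exact ⟨h1.symm, h3, h2, by rwa [min_comm, max_comm]⟩

lemma relpos_ne_zero (hUD : D ∪ U = Finset.Icc 1 (n + 1)) (hdisj : Disjoint D U)
    {a v : ℕ} (ha : a ≤ n + 2) (hv : v ≤ n + 2) (hne : v ≠ a) :
    relpos n D U a v ≠ 0 :=
  fun hh => hne ((relpos_eq_zero_iff hUD hdisj ha hv).mp hh)

lemma relpos_antisymm (hUD : D ∪ U = Finset.Icc 1 (n + 1)) (hdisj : Disjoint D U)
    {a b : ℕ} (ha : a ≤ n + 2) (hb : b ≤ n + 2) (hab : b ≠ a) :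
    relpos n D U b a = n + 3 - relpos n D U a b := by
  have h0 : relpos n D U a b ≠ 0 := relpos_ne_zero hUD hdisj ha hb hab
  have h1 := relpos_lt_N (n := n) (D := D) (U := U) a b
  rw [relpos_shift hUD hdisj ha hb ha, relpos_self]
  split_ifs <;> omega

lemma relpos_surj (hUD : D ∪ U = Finset.Icc 1 (n + 1)) (hdisj : Disjoint D U)
    {x : ℕ} (t : ℕ) (hx : x ≤ n + 2) (ht : t ≤ n + 2) :
    ∃ v, v ≤ n + 2 ∧ relpos n D U x v = t := by
  have hpx := pos_le hUD hdisj hx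
  have hmlt := Nat.mod_lt (pos n D U x + t) (y := n + 3) (by omega)
  obtain ⟨v, hv, hpv⟩ := pos_surj hUD hdisj
    (p := (pos n D U x + t) % (n + 3)) (by omega)
  have hin : (pos n D U x + t) % (n + 3)
      = if pos n D U x + t < n + 3 then pos n D U x + t else pos n D U x + t - (n + 3) :=
    mod_two_lt (by omega) (by omega)
  rw [hin] at hpv
  refine ⟨v, hv, ?_⟩
  split_ifs at hpv <;>
    · rw [relpos, hpv, mod_two_lt (by omega) (by omega)]
      split_ifs <;> omega

lemma T_mem_facts (hUD : D ∪ U = Finset.Icc 1 (n + 1)) (hdisj : Disjoint D U)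
    {δ : ℕ × ℕ} (h : IsInternalDiag n D U δ) :
    δ.1 < δ.2 ∧ δ.2 ≤ n + 2 ∧ 2 ≤ relpos n D U δ.1 δ.2 ∧ relpos n D U δ.1 δ.2 ≤ n + 1 := by
  obtain ⟨⟨h1, h2⟩, h3⟩ := h
  have h4 : relpos n D U δ.1 δ.2 ≠ 0 :=
    relpos_ne_zero hUD hdisj (show δ.1 ≤ n + 2 by omega) h2 (by omega)
  have h5 : relpos n D U δ.1 δ.2 ≠ 1 := fun hc => h3 ⟨⟨h1, h2⟩, Or.inl hc⟩
  have h6 : relpos n D U δ.2 δ.1 ≠ 1 := fun hc => h3 ⟨⟨h1, h2⟩, Or.inr hc⟩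
  have h7 := relpos_antisymm hUD hdisj (a := δ.1) (b := δ.2) (by omega) h2 (by omega)
  have h8 := relpos_lt_N (n := n) (D := D) (U := U) δ.1 δ.2
  exact ⟨h1, h2, by omega, by omega⟩

lemma cross_swap_right {d : ℕ × ℕ} {p q : ℕ} :
    Cross n D U d (p, q) ↔ Cross n D U d (q, p) := by
  unfold Cross; dsimp only; tauto

lemma cross_swap_left {e : ℕ × ℕ} {a b : ℕ} :
    Cross n D U (a, b) e ↔ Cross n D U (b, a) e := by
  unfold Cross; dsimp only; tauto

lemma cross_orient {a b c d : ℕ} (h : Cross n D U (a, b) (c, d)) :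
    Cross n D U (min a b, max a b) (min c d, max c d) := by
  rcases le_or_gt a b with h1 | h1 <;> rcases le_or_gt c d with h2 | h2 <;>
    simp only [min_eq_left, max_eq_right, min_eq_right, max_eq_left,
      le_of_lt, h1, h2] <;>
    first
      | exact h
      | exact cross_swap_right.mp h
      | exact cross_swap_left.mp h
      | exact cross_swap_left.mp (cross_swap_right.mp h)

lemma boundary_not_cross {b e : ℕ × ℕ} (hb : IsBoundaryEdge n D U b) :
    ¬ Cross n D U b e := by
  rintro ⟨-, -, -, -, -, -, hcr⟩
  obtain ⟨-, hb2⟩ := hb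
  rcases hb2 with h1 | h1 <;>
    rcases hcr with ⟨⟨-, hx0, hx⟩, ⟨-, hy0, hy⟩⟩ | ⟨⟨-, hx0, hx⟩, ⟨-, hy0, hy⟩⟩ <;> omega

lemma cross_symm (hUD : D ∪ U = Finset.Icc 1 (n + 1)) (hdisj : Disjoint D U)
    {d e : ℕ × ℕ} (hd1 : d.1 ≤ n + 2) (hd2 : d.2 ≤ n + 2)
    (he1 : e.1 ≤ n + 2) (he2 : e.2 ≤ n + 2)
    (h : Cross n D U d e) : Cross n D U e d := by
  obtain ⟨h1, h2, h3, h4, h5, h6, h7⟩ := h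
  refine ⟨h2, h1, h3.symm, h5.symm, h4.symm, h6.symm, ?_⟩
  rw [SB_base hUD hdisj hd1 hd1 hd2 he1, SB_base hUD hdisj hd1 hd2 hd1 he2,
    SB_base hUD hdisj hd1 hd1 hd2 he2, SB_base hUD hdisj hd1 hd2 hd1 he1] at h7
  rw [SB_base hUD hdisj hd1 he1 he2 hd1, SB_base hUD hdisj hd1 he2 he1 hd2,
    SB_base hUD hdisj hd1 he1 he2 hd2, SB_base hUD hdisj hd1 he2 he1 hd1]
  have z1 : relpos n D U d.1 d.1 = 0 := relpos_self _
  have z2 : relpos n D U d.1 d.2 ≠ 0 := relpos_ne_zero hUD hdisj hd1 hd2 h1.symm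
  have z3 : relpos n D U d.1 e.1 ≠ relpos n D U d.1 e.2 :=
    fun hh => h2 ((relpos_inj_iff hUD hdisj hd1 he1 he2).mp hh)
  have z4 : relpos n D U d.1 e.1 ≠ relpos n D U d.1 d.2 :=
    fun hh => h5 ((relpos_inj_iff hUD hdisj hd1 he1 hd2).mp hh).symm
  have z5 : relpos n D U d.1 e.2 ≠ relpos n D U d.1 d.2 :=
    fun hh => h6 ((relpos_inj_iff hUD hdisj hd1 he2 hd2).mp hh).symm
  have z6 : relpos n D U d.1 e.1 ≠ 0 := relpos_ne_zero hUD hdisj hd1 he1 h3.symm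
  have z7 : relpos n D U d.1 e.2 ≠ 0 := relpos_ne_zero hUD hdisj hd1 he2 h4.symm
  omega

lemma no_cross_esym (hUD : D ∪ U = Finset.Icc 1 (n + 1)) (hdisj : Disjoint D U)
    (hT : IsTriangulation n D U T) {a b c d : ℕ}
    (h1 : ESym n D U T a b) (h2 : ESym n D U T c d)
    (hc : Cross n D U (a, b) (c, d)) : False := by
  obtain ⟨-, ha, hb, hab⟩ := h1
  obtain ⟨-, hcc, hdd, hcd⟩ := h2
  have hc' := cross_orient hc
  rcases hab with hab | hab
  · rcases hcd with hcd | hcd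
    · exact hT.2.1 _ hab _ hcd hc'
    · exact boundary_not_cross hcd
        (cross_symm hUD hdisj (by simp; omega) (by simp; omega) (by simp; omega)
          (by simp; omega) hc')
  · exact boundary_not_cross hab hc'

lemma esym_of_mem (hT : IsTriangulation n D U T) {δ : ℕ × ℕ} (h : δ ∈ T) :
    ESym n D U T δ.1 δ.2 := by
  obtain ⟨⟨h1, h2⟩, -⟩ := hT.1 δ h
  refine ⟨by omega, by omega, h2, ?_⟩
  rw [min_eq_left (by omega), max_eq_right (by omega)]
  exact Or.inl (by simpa using h)

/-- Existence of the triangle adjacent to an edge `{x,y}` on the side of the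
counterclockwise arc from `x` to `y`. -/
lemma adj_tri_exists (hUD : D ∪ U = Finset.Icc 1 (n + 1)) (hdisj : Disjoint D U)
    (hT : IsTriangulation n D U T) {x y : ℕ}
    (hx : x ≤ n + 2) (hy : y ≤ n + 2) (he : ESym n D U T x y)
    (hint : 2 ≤ relpos n D U x y) :
    ∃ c, StrictBetween n D U x y c ∧ ESym n D U T x c ∧ ESym n D U T c y := by
  classical
  have hm := relpos_lt_N (n := n) (D := D) (U := U) x y
  set S : Finset ℕ := (Finset.range (n + 3)).filter
    (fun v => StrictBetween n D U x y v ∧ ESym n D U T x v) with hS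
  have hSne : S.Nonempty := by
    obtain ⟨v1, hv1, hr1⟩ := relpos_surj hUD hdisj 1 hx (by omega)
    have hxv1 : x ≠ v1 := by
      intro hh; rw [← hh, relpos_self] at hr1; omega
    refine ⟨v1, Finset.mem_filter.mpr ⟨Finset.mem_range.mpr (by omega),
      ⟨hv1, by omega, by omega⟩, hxv1, hx, hv1, ?_⟩⟩
    refine Or.inr ⟨⟨by omega, by omega⟩, ?_⟩
    rcases le_or_gt x v1 with hh | hh
    · rw [min_eq_left hh, max_eq_right hh]; exact Or.inl hr1
    · rw [min_eq_right (by omega), max_eq_left (by omega)]; exact Or.inr hr1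
  obtain ⟨v, hvS, hvmax⟩ := Finset.exists_max_image S (fun v => relpos n D U x v) hSne
  obtain ⟨-, hvSB, hvE⟩ := Finset.mem_filter.mp hvS
  refine ⟨v, hvSB, hvE, ?_⟩
  by_contra hnc
  obtain ⟨hv2, hrv1, hrv2⟩ := hvSB
  have hvy : v ≠ y := by
    intro hh; rw [hh] at hrv2; omega
  have hdiag : IsDiag n (min v y, max v y) := ⟨by simp; omega, by simp; omega⟩
  have hnb : ¬ IsBoundaryEdge n D U (min v y, max v y) := by
    intro hb
    exact hnc ⟨hvy, hv2, hy, Or.inr hb⟩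
  have hnT : (min v y, max v y) ∉ T := by
    intro hmem
    exact hnc ⟨hvy, hv2, hy, Or.inl hmem⟩
  obtain ⟨ε, hεT, hcr⟩ := hT.2.2 _ ⟨hdiag, hnb⟩ hnT
  -- reorient the crossing to the (v, y) orientation
  have hcr' : Cross n D U (v, y) ε := by
    rcases le_or_gt v y with hh | hh
    · rwa [min_eq_left hh, max_eq_right hh] at hcr
    · rw [min_eq_right (by omega), max_eq_left (by omega)] at hcr
      exact cross_swap_left.mp hcr
  obtain ⟨-, -, hne1, hne2, hne3, hne4, hcrr⟩ := hcr'
  -- c is the ε-endpoint inside arc v→y, c' the other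
  obtain ⟨c, c', hcT, hc, hc'⟩ : ∃ c c', ESym n D U T c c' ∧
      StrictBetween n D U v y c ∧ StrictBetween n D U y v c' := by
    rcases hcrr with ⟨hp, hq⟩ | ⟨hp, hq⟩
    · exact ⟨ε.1, ε.2, esym_of_mem hT hεT, hp, hq⟩
    · exact ⟨ε.2, ε.1, esym_comm (esym_of_mem hT hεT), hp, hq⟩
  have hcb : c ≤ n + 2 := hc.1
  have hc'b : c' ≤ n + 2 := hc'.1
  have hcc' : c ≠ c' := hcT.1
  rw [SB_base hUD hdisj hx hv2 hy hcb] at hc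
  rw [SB_base hUD hdisj hx hy hv2 hc'b] at hc'
  have z1 : relpos n D U x x = 0 := relpos_self _
  have z2 : relpos n D U x v ≠ 0 := by omega
  have hrc : relpos n D U x v < relpos n D U x c ∧ relpos n D U x c < relpos n D U x y := by
    omega
  have hxc_ne : x ≠ c := by
    intro hh; rw [← hh, relpos_self] at hrc; omega
  have hrcc' : relpos n D U x c ≠ relpos n D U x c' :=
    fun hh => hcc' ((relpos_inj_iff hUD hdisj hx hcb hc'b).mp hh)
  by_cases hc'x : c' = x
  · -- ε = {x, c}: contradicts maximality of v
    subst hc'x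
    have hcS : c ∈ S := by
      refine Finset.mem_filter.mpr ⟨Finset.mem_range.mpr (by omega),
        ⟨hcb, by omega, by omega⟩, ?_⟩
      exact esym_comm hcT
    have := hvmax c hcS
    omega
  · have hz : relpos n D U x c' ≠ 0 := relpos_ne_zero hUD hdisj hx hc'b hc'x
    rcases (by omega : relpos n D U x y < relpos n D U x c' ∨
        (0 < relpos n D U x c' ∧ relpos n D U x c' < relpos n D U x v)) with hcase | hcase
    · -- ε crosses {x, y}
      refine no_cross_esym hUD hdisj hT he hcT
        ⟨?_, hcc', hxc_ne, ?_, ?_, ?_, Or.inl ⟨?_, ?_⟩⟩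
      · show x ≠ y
        intro hh
        have h0 : relpos n D U x y = 0 := by rw [hh]; exact relpos_self _
        omega
      · show x ≠ c'
        exact fun hh => hc'x hh.symm
      · show y ≠ c
        intro hh
        have h0 : relpos n D U x y = relpos n D U x c := by rw [hh]
        omega
      · show y ≠ c'
        intro hh
        have h0 : relpos n D U x y = relpos n D U x c' := by rw [hh]
        omega
      · show StrictBetween n D U x y c
        exact ⟨hcb, by omega, by omega⟩
      · show StrictBetween n D U y x c'
        rw [SB_base hUD hdisj hx hy hx hc'b]; omega
    · -- ε crosses {x, v}
      refine no_cross_esym hUD hdisj hT hvE hcT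
        ⟨?_, hcc', hxc_ne, ?_, ?_, ?_, Or.inr ⟨?_, ?_⟩⟩
      · show x ≠ v
        intro hh
        have h0 : relpos n D U x v = 0 := by rw [hh]; exact relpos_self _
        omega
      · show x ≠ c'
        exact fun hh => hc'x hh.symm
      · show v ≠ c
        intro hh
        have h0 : relpos n D U x v = relpos n D U x c := by rw [hh]
        omega
      · show v ≠ c'
        intro hh
        have h0 : relpos n D U x v = relpos n D U x c' := by rw [hh]
        omega
      · show StrictBetween n D U x v c'
        rw [SB_base hUD hdisj hx hx hv2 hc'b]; omega
      · show StrictBetween n D U v x c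
        rw [SB_base hUD hdisj hx hv2 hx hcb]; omega

/-- Uniqueness of the adjacent triangle. -/
lemma adj_tri_unique (hUD : D ∪ U = Finset.Icc 1 (n + 1)) (hdisj : Disjoint D U)
    (hT : IsTriangulation n D U T) {x y c c' : ℕ}
    (hx : x ≤ n + 2) (hy : y ≤ n + 2)
    (hc : StrictBetween n D U x y c ∧ ESym n D U T x c ∧ ESym n D U T c y)
    (hc' : StrictBetween n D U x y c' ∧ ESym n D U T x c' ∧ ESym n D U T c' y) :
    c = c' := by
  obtain ⟨⟨hcb, hc1, hc2⟩, hxc, hcy⟩ := hc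
  obtain ⟨⟨hc'b, hc'1, hc'2⟩, hxc', hc'y⟩ := hc'
  have hm := relpos_lt_N (n := n) (D := D) (U := U) x y
  have hz : relpos n D U x x = 0 := relpos_self _
  rcases lt_trichotomy (relpos n D U x c) (relpos n D U x c') with hlt | heq | hlt
  · -- {x,c'} crosses {c,y}
    exfalso
    refine no_cross_esym hUD hdisj hT hxc' hcy
      ⟨hxc'.1, hcy.1, ?_, ?_, ?_, ?_, Or.inl ⟨?_, ?_⟩⟩
    · show x ≠ c
      intro hh
      have h0 : relpos n D U x c = 0 := by rw [← hh]; exact relpos_self _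
      omega
    · show x ≠ y
      intro hh
      have h0 : relpos n D U x y = 0 := by rw [hh]; exact relpos_self _
      omega
    · show c' ≠ c
      intro hh; rw [hh] at hlt; omega
    · show c' ≠ y
      intro hh
      have h0 : relpos n D U x c' = relpos n D U x y := by rw [hh]
      omega
    · show StrictBetween n D U x c' c
      rw [SB_base hUD hdisj hx hx hc'b hcb]; omega
    · show StrictBetween n D U c' x y
      rw [SB_base hUD hdisj hx hc'b hx hy]; omega
  · exact (relpos_inj_iff hUD hdisj hx hcb hc'b).mp heq
  · exfalso
    refine no_cross_esym hUD hdisj hT hxc hc'y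
      ⟨hxc.1, hc'y.1, ?_, ?_, ?_, ?_, Or.inl ⟨?_, ?_⟩⟩
    · show x ≠ c'
      intro hh
      have h0 : relpos n D U x c' = 0 := by rw [← hh]; exact relpos_self _
      omega
    · show x ≠ y
      intro hh
      have h0 : relpos n D U x y = 0 := by rw [hh]; exact relpos_self _
      omega
    · show c ≠ c'
      intro hh; rw [hh] at hlt; omega
    · show c ≠ y
      intro hh
      have h0 : relpos n D U x c = relpos n D U x y := by rw [hh]
      omega
    · show StrictBetween n D U x c c'
      rw [SB_base hUD hdisj hx hx hcb hc'b]; omega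
    · show StrictBetween n D U c x y
      rw [SB_base hUD hdisj hx hcb hx hy]; omega

end CrossL

end Spines
namespace Spines

section TriL

variable {n : ℕ} {D U : Finset ℕ} {T : Finset (ℕ × ℕ)}

lemma SB_ne (hUD : D ∪ U = Finset.Icc 1 (n + 1)) (hdisj : Disjoint D U)
    {x y v : ℕ} (hx : x ≤ n + 2) (hy : y ≤ n + 2)
    (h : StrictBetween n D U x y v) : v ≠ x ∧ v ≠ y := by
  obtain ⟨hv, h1, h2⟩ := h
  constructor
  · intro hh
    have h0 : relpos n D U x v = 0 := by rw [hh]; exact relpos_self _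
    omega
  · intro hh
    have h0 : relpos n D U x v = relpos n D U x y := by rw [hh]
    omega

lemma edgeOf_of_esym {a b : ℕ} (hab : a < b) (h : ESym n D U T a b) :
    EdgeOf n D U T a b := by
  obtain ⟨-, -, -, h4⟩ := h
  rwa [min_eq_left (by omega), max_eq_right (by omega)] at h4

lemma esym_of_edgeOf {a b : ℕ} (hab : a < b) (hb : b ≤ n + 2)
    (h : EdgeOf n D U T a b) : ESym n D U T a b := by
  refine ⟨by omega, by omega, hb, ?_⟩
  rwa [min_eq_left (by omega), max_eq_right (by omega)]

lemma triangle_esym {i j k : ℕ} (h : IsTriangleOf n D U T i j k) :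
    ESym n D U T i j ∧ ESym n D U T j k ∧ ESym n D U T i k := by
  obtain ⟨h1, h2, h3, h4, h5, h6⟩ := h
  exact ⟨esym_of_edgeOf h1 (by omega) h4, esym_of_edgeOf h2 h3 h5,
    esym_of_edgeOf (by omega) h3 h6⟩

lemma isTriangleOf_of_esym {i j k : ℕ} (h1 : i < j) (h2 : j < k) (h3 : k ≤ n + 2)
    (e1 : ESym n D U T i j) (e2 : ESym n D U T j k) (e3 : ESym n D U T i k) :
    IsTriangleOf n D U T i j k :=
  ⟨h1, h2, h3, edgeOf_of_esym h1 e1, edgeOf_of_esym h2 e2, edgeOf_of_esym (by omega) e3⟩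

lemma self_mem_T_edge {δ : ℕ × ℕ} (hδ : δ ∈ T) : EdgeOf n D U T δ.1 δ.2 :=
  Or.inl (by simpa using hδ)

lemma triWith_of (hT : IsTriangulation n D U T) {δ : ℕ × ℕ} (hδ : δ ∈ T)
    {c : ℕ} (hc1 : c ≠ δ.1) (hc2 : c ≠ δ.2)
    (h1 : ESym n D U T δ.1 c) (h2 : ESym n D U T c δ.2) :
    TriWith n D U T δ c := by
  obtain ⟨⟨hd1, hd2⟩, -⟩ := hT.1 δ hδ
  have hδe : ESym n D U T δ.1 δ.2 := esym_of_mem hT hδ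
  unfold TriWith
  split_ifs with w1 w2
  · exact isTriangleOf_of_esym w1 hd1 hd2 (esym_comm h1) hδe h2
  · exact isTriangleOf_of_esym (by omega) w2 hd2 h1 h2 hδe
  · exact isTriangleOf_of_esym hd1 (by omega) h2.2.1 hδe (esym_comm h2) h1

lemma triWith_elim (hT : IsTriangulation n D U T) {δ : ℕ × ℕ}
    (hd1 : δ.1 < δ.2) {c : ℕ} (h : TriWith n D U T δ c) :
    ESym n D U T δ.1 c ∧ ESym n D U T c δ.2 := by
  unfold TriWith at h
  split_ifs at h with w1 w2
  · obtain ⟨e1, e2, e3⟩ := triangle_esym h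
    exact ⟨esym_comm e1, e3⟩
  · obtain ⟨e1, e2, e3⟩ := triangle_esym h
    exact ⟨e1, e2⟩
  · obtain ⟨e1, e2, e3⟩ := triangle_esym h
    exact ⟨e3, esym_comm e2⟩

/-- The value of `spineSrc` given a witness for the triangle below. -/
lemma spineSrc_eq (hUD : D ∪ U = Finset.Icc 1 (n + 1)) (hdisj : Disjoint D U)
    (hT : IsTriangulation n D U T) {δ : ℕ × ℕ} (hδ : δ ∈ T)
    {u : ℕ} (hu : StrictBetween n D U δ.1 δ.2 u) (hTW : TriWith n D U T δ u) :
    spineSrc n D U T δ = midOf δ.1 δ.2 u := by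
  obtain ⟨hd1, hd2, -, -⟩ := T_mem_facts hUD hdisj (hT.1 δ hδ)
  have hex : ∃ c, StrictBetween n D U δ.1 δ.2 c ∧ TriWith n D U T δ c := ⟨u, hu, hTW⟩
  rw [spineSrc, dif_pos hex]
  congr 1
  obtain ⟨hs1, hs2⟩ := hex.choose_spec
  obtain ⟨e1, e2⟩ := triWith_elim hT hd1 hs2
  obtain ⟨f1, f2⟩ := triWith_elim hT hd1 hTW
  exact adj_tri_unique hUD hdisj hT (by omega) hd2 ⟨hs1, e1, e2⟩ ⟨hu, f1, f2⟩

lemma spineTgt_eq (hUD : D ∪ U = Finset.Icc 1 (n + 1)) (hdisj : Disjoint D U)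
    (hT : IsTriangulation n D U T) {δ : ℕ × ℕ} (hδ : δ ∈ T)
    {w : ℕ} (hw : StrictBetween n D U δ.2 δ.1 w) (hTW : TriWith n D U T δ w) :
    spineTgt n D U T δ = midOf δ.1 δ.2 w := by
  obtain ⟨hd1, hd2, -, -⟩ := T_mem_facts hUD hdisj (hT.1 δ hδ)
  have hex : ∃ c, StrictBetween n D U δ.2 δ.1 c ∧ TriWith n D U T δ c := ⟨w, hw, hTW⟩
  rw [spineTgt, dif_pos hex]
  congr 1
  obtain ⟨hs1, hs2⟩ := hex.choose_spec
  obtain ⟨e1, e2⟩ := triWith_elim hT hd1 hs2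
  obtain ⟨f1, f2⟩ := triWith_elim hT hd1 hTW
  exact adj_tri_unique hUD hdisj hT hd2 (by omega)
    ⟨hs1, esym_comm e2, esym_comm e1⟩ ⟨hw, esym_comm f2, esym_comm f1⟩

/-- Every diagonal of a triangulation has a triangle on each side. -/
lemma spine_exists (hUD : D ∪ U = Finset.Icc 1 (n + 1)) (hdisj : Disjoint D U)
    (hT : IsTriangulation n D U T) {δ : ℕ × ℕ} (hδ : δ ∈ T) :
    ∃ u w, StrictBetween n D U δ.1 δ.2 u ∧ TriWith n D U T δ u ∧
      StrictBetween n D U δ.2 δ.1 w ∧ TriWith n D U T δ w := by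
  obtain ⟨hd1, hd2, hr1, hr2⟩ := T_mem_facts hUD hdisj (hT.1 δ hδ)
  have he := esym_of_mem hT hδ
  obtain ⟨u, hu1, hu2, hu3⟩ := adj_tri_exists hUD hdisj hT (by omega) hd2 he hr1
  have hr21 : 2 ≤ relpos n D U δ.2 δ.1 := by
    have := relpos_antisymm hUD hdisj (a := δ.1) (b := δ.2) (by omega) hd2 (by omega)
    omega
  obtain ⟨w, hw1, hw2, hw3⟩ := adj_tri_exists hUD hdisj hT hd2 (by omega)
    (esym_comm he) hr21
  obtain ⟨hun1, hun2⟩ := SB_ne hUD hdisj (by omega) hd2 hu1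
  obtain ⟨hwn1, hwn2⟩ := SB_ne hUD hdisj hd2 (by omega) hw1
  exact ⟨u, w, hu1, triWith_of hT hδ hun1 hun2 hu2 hu3,
    hw1, triWith_of hT hδ hwn2 hwn1 (esym_comm hw3) (esym_comm hw2)⟩

/-- Middle-type: a label `j` between `i` and `k` is a down label iff it lies on the
arc from `i` to `k`. -/
lemma mid_type (hUD : D ∪ U = Finset.Icc 1 (n + 1)) (hdisj : Disjoint D U)
    {i j k : ℕ} (hij : i < j) (hjk : j < k) (hk : k ≤ n + 2) :
    (j ∈ D ↔ StrictBetween n D U i k j) ∧ (j ∈ U ↔ StrictBetween n D U k i j) := by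
  have hjDU : j ∈ D ∨ j ∈ U := by
    have : j ∈ D ∪ U := by rw [hUD, Finset.mem_Icc]; omega
    rwa [Finset.mem_union] at this
  have hj : j ≤ n + 2 := by omega
  have hi : i ≤ n + 2 := by omega
  have hz : relpos n D U j j = 0 := relpos_self _
  have hzi : relpos n D U j i ≠ 0 := relpos_ne_zero hUD hdisj hj hi (by omega)
  have hzk : relpos n D U j k ≠ 0 := relpos_ne_zero hUD hdisj hj hk (by omega)
  have hD : j ∈ D → StrictBetween n D U i k j := by
    intro hjD
    have hb1 := (block_D hUD hdisj hjD hk).1 hjk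
    have hb2 := (block_D hUD hdisj hjD hi).2 hij
    rw [SB_base hUD hdisj hj hi hk hj]
    omega
  have hU : j ∈ U → StrictBetween n D U k i j := by
    intro hjU
    have hb1 := (block_U hUD hdisj hjU hi).1 hij
    have hb2 := (block_U hUD hdisj hjU hk).2 hjk
    rw [SB_base hUD hdisj hj hk hi hj]
    omega
  have hexcl : ¬ (StrictBetween n D U i k j ∧ StrictBetween n D U k i j) := by
    rintro ⟨p1, p2⟩
    rw [SB_base hUD hdisj hj hi hk hj] at p1
    rw [SB_base hUD hdisj hj hk hi hj] at p2
    omega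
  have hDU_disj : ¬ (j ∈ D ∧ j ∈ U) := by
    rintro ⟨p1, p2⟩
    exact (Finset.disjoint_left.mp hdisj p1) p2
  constructor
  · constructor
    · exact hD
    · intro hSB
      rcases hjDU with h | h
      · exact h
      · exact absurd ⟨hSB, hU h⟩ hexcl
  · constructor
    · exact hU
    · intro hSB
      rcases hjDU with h | h
      · exact absurd ⟨hD h, hSB⟩ hexcl
      · exact h

/-- Each label is the middle vertex of at most one triangle of `T`. -/
lemma mid_unique (hUD : D ∪ U = Finset.Icc 1 (n + 1)) (hdisj : Disjoint D U)
    (hT : IsTriangulation n D U T) {i j k i' k' : ℕ}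
    (h1 : IsTriangleOf n D U T i j k) (h2 : IsTriangleOf n D U T i' j k') :
    i = i' ∧ k = k' := by
  have hij := h1.1
  have hjk := h1.2.1
  have hk := h1.2.2.1
  have hij' := h2.1
  have hjk' := h2.2.1
  have hk' := h2.2.2.1
  have hj : j ≤ n + 2 := by omega
  have hi : i ≤ n + 2 := by omega
  have hi' : i' ≤ n + 2 := by omega
  have hz : relpos n D U j j = 0 := relpos_self _
  have hzi : relpos n D U j i ≠ 0 := relpos_ne_zero hUD hdisj hj hi (by omega)
  have hzi' : relpos n D U j i' ≠ 0 := relpos_ne_zero hUD hdisj hj hi' (by omega)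
  have hzk : relpos n D U j k ≠ 0 := relpos_ne_zero hUD hdisj hj hk (by omega)
  have hzk' : relpos n D U j k' ≠ 0 := relpos_ne_zero hUD hdisj hj hk' (by omega)
  obtain ⟨e1, e2, e3⟩ := triangle_esym h1
  obtain ⟨e1', e2', e3'⟩ := triangle_esym h2
  have hjDU : j ∈ D ∨ j ∈ U := by
    have : j ∈ D ∪ U := by rw [hUD, Finset.mem_Icc]; omega
    rwa [Finset.mem_union] at this
  have hinj : ∀ x y : ℕ, x ≤ n + 2 → y ≤ n + 2 →
      relpos n D U j x ≠ relpos n D U j y → x ≠ y := by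
    intro x y hx hy hne hh
    exact hne (by rw [hh])
  rcases hjDU with hjD | hjU
  · -- j is a down label: greater labels first
    have bk := (block_D hUD hdisj hjD hk).1 hjk
    have bk' := (block_D hUD hdisj hjD hk').1 hjk'
    have bi := (block_D hUD hdisj hjD hi).2 hij
    have bi' := (block_D hUD hdisj hjD hi').2 hij'
    have hkk : k = k' := by
      rcases lt_trichotomy (relpos n D U j k) (relpos n D U j k') with hlt | heq | hlt
      · exfalso
        refine no_cross_esym hUD hdisj hT e3 e2'
          ⟨?_, ?_, ?_, ?_, ?_, ?_, Or.inl ⟨?_, ?_⟩⟩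
        · show i ≠ k; omega
        · show j ≠ k'; omega
        · show i ≠ j; omega
        · exact hinj i k' hi hk' (by omega)
        · show k ≠ j; omega
        · exact hinj k k' hk hk' (by omega)
        · show StrictBetween n D U i k j
          rw [SB_base hUD hdisj hj hi hk hj]; omega
        · show StrictBetween n D U k i k'
          rw [SB_base hUD hdisj hj hk hi hk']; omega
      · exact (relpos_inj_iff hUD hdisj hj hk hk').mp heq
      · exfalso
        refine no_cross_esym hUD hdisj hT e3' e2
          ⟨?_, ?_, ?_, ?_, ?_, ?_, Or.inl ⟨?_, ?_⟩⟩
        · show i' ≠ k'; omega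
        · show j ≠ k; omega
        · show i' ≠ j; omega
        · exact hinj i' k hi' hk (by omega)
        · show k' ≠ j; omega
        · exact hinj k' k hk' hk (by omega)
        · show StrictBetween n D U i' k' j
          rw [SB_base hUD hdisj hj hi' hk' hj]; omega
        · show StrictBetween n D U k' i' k
          rw [SB_base hUD hdisj hj hk' hi' hk]; omega
    subst hkk
    refine ⟨?_, rfl⟩
    rcases lt_trichotomy (relpos n D U j i) (relpos n D U j i') with hlt | heq | hlt
    · exfalso
      refine no_cross_esym hUD hdisj hT e3' e1
        ⟨?_, ?_, ?_, ?_, ?_, ?_, Or.inr ⟨?_, ?_⟩⟩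
      · show i' ≠ k; omega
      · show i ≠ j; omega
      · exact hinj i' i hi' hi (by omega)
      · show i' ≠ j; omega
      · exact hinj k i hk hi (by omega)
      · show k ≠ j; omega
      · show StrictBetween n D U i' k j
        rw [SB_base hUD hdisj hj hi' hk hj]; omega
      · show StrictBetween n D U k i' i
        rw [SB_base hUD hdisj hj hk hi' hi]; omega
    · exact (relpos_inj_iff hUD hdisj hj hi hi').mp heq
    · exfalso
      refine no_cross_esym hUD hdisj hT e3 e1'
        ⟨?_, ?_, ?_, ?_, ?_, ?_, Or.inr ⟨?_, ?_⟩⟩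
      · show i ≠ k; omega
      · show i' ≠ j; omega
      · exact hinj i i' hi hi' (by omega)
      · show i ≠ j; omega
      · exact hinj k i' hk hi' (by omega)
      · show k ≠ j; omega
      · show StrictBetween n D U i k j
        rw [SB_base hUD hdisj hj hi hk hj]; omega
      · show StrictBetween n D U k i i'
        rw [SB_base hUD hdisj hj hk hi hi']; omega
  · -- j is an up label: smaller labels first
    have bk := (block_U hUD hdisj hjU hk).2 hjk
    have bk' := (block_U hUD hdisj hjU hk').2 hjk'
    have bi := (block_U hUD hdisj hjU hi).1 hij
    have bi' := (block_U hUD hdisj hjU hi').1 hij'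
    have hkk : k = k' := by
      rcases lt_trichotomy (relpos n D U j k) (relpos n D U j k') with hlt | heq | hlt
      · exfalso
        refine no_cross_esym hUD hdisj hT e3' e2
          ⟨?_, ?_, ?_, ?_, ?_, ?_, Or.inr ⟨?_, ?_⟩⟩
        · show i' ≠ k'; omega
        · show j ≠ k; omega
        · show i' ≠ j; omega
        · exact hinj i' k hi' hk (by omega)
        · show k' ≠ j; omega
        · exact hinj k' k hk' hk (by omega)
        · show StrictBetween n D U i' k' k
          rw [SB_base hUD hdisj hj hi' hk' hk]; omega
        · show StrictBetween n D U k' i' j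
          rw [SB_base hUD hdisj hj hk' hi' hj]; omega
      · exact (relpos_inj_iff hUD hdisj hj hk hk').mp heq
      · exfalso
        refine no_cross_esym hUD hdisj hT e3 e2'
          ⟨?_, ?_, ?_, ?_, ?_, ?_, Or.inr ⟨?_, ?_⟩⟩
        · show i ≠ k; omega
        · show j ≠ k'; omega
        · show i ≠ j; omega
        · exact hinj i k' hi hk' (by omega)
        · show k ≠ j; omega
        · exact hinj k k' hk hk' (by omega)
        · show StrictBetween n D U i k k'
          rw [SB_base hUD hdisj hj hi hk hk']; omega
        · show StrictBetween n D U k i j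
          rw [SB_base hUD hdisj hj hk hi hj]; omega
    subst hkk
    refine ⟨?_, rfl⟩
    rcases lt_trichotomy (relpos n D U j i) (relpos n D U j i') with hlt | heq | hlt
    · exfalso
      refine no_cross_esym hUD hdisj hT e3 e1'
        ⟨?_, ?_, ?_, ?_, ?_, ?_, Or.inl ⟨?_, ?_⟩⟩
      · show i ≠ k; omega
      · show i' ≠ j; omega
      · exact hinj i i' hi hi' (by omega)
      · show i ≠ j; omega
      · exact hinj k i' hk hi' (by omega)
      · show k ≠ j; omega
      · show StrictBetween n D U i k i'
        rw [SB_base hUD hdisj hj hi hk hi']; omega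
      · show StrictBetween n D U k i j
        rw [SB_base hUD hdisj hj hk hi hj]; omega
    · exact (relpos_inj_iff hUD hdisj hj hi hi').mp heq
    · exfalso
      refine no_cross_esym hUD hdisj hT e3' e1
        ⟨?_, ?_, ?_, ?_, ?_, ?_, Or.inl ⟨?_, ?_⟩⟩
      · show i' ≠ k; omega
      · show i ≠ j; omega
      · exact hinj i' i hi' hi (by omega)
      · show i' ≠ j; omega
      · exact hinj k i hk hi (by omega)
      · show k ≠ j; omega
      · show StrictBetween n D U i' k i
        rw [SB_base hUD hdisj hj hi' hk hi]; omega
      · show StrictBetween n D U k i' j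
        rw [SB_base hUD hdisj hj hk hi' hj]; omega

lemma xcoord_tri (hUD : D ∪ U = Finset.Icc 1 (n + 1)) (hdisj : Disjoint D U)
    (hT : IsTriangulation n D U T) {i j k : ℕ} (h : IsTriangleOf n D U T i j k) :
    xcoord n D U T j = if j ∈ D then
        ((bel n D U (i, j) : ℝ) + 1) * ((bel n D U (j, k) : ℝ) + 1)
      else ((n : ℝ) + 2) -
        (((n : ℝ) + 2) - (bel n D U (i, j) : ℝ)) *
          (((n : ℝ) + 2) - (bel n D U (j, k) : ℝ)) := by
  have hex : ∃ p : ℕ × ℕ, IsTriangleOf n D U T p.1 j p.2 := ⟨(i, k), h⟩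
  rw [xcoord, dif_pos hex]
  obtain ⟨q1, q2⟩ := mid_unique hUD hdisj hT hex.choose_spec h
  rw [q1, q2]

end TriL

end Spines
namespace Spines

section BelL

variable {n : ℕ} {D U : Finset ℕ} {T : Finset (ℕ × ℕ)}

lemma bel_le (δ : ℕ × ℕ) : bel n D U δ ≤ n + 1 := by
  unfold bel Bel
  refine le_trans (Finset.card_filter_le _ _) ?_
  rw [Nat.card_Icc]
  omega

lemma SB_base2 (hUD : D ∪ U = Finset.Icc 1 (n + 1)) (hdisj : Disjoint D U)
    {a x y : ℕ} (ha : a ≤ n + 2) (hx : x ≤ n + 2) (hy : y ≤ n + 2) (z : ℕ) :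
    StrictBetween n D U x y z ↔ z ≤ n + 2 ∧
      ((relpos n D U a x < relpos n D U a z ∧ relpos n D U a z < relpos n D U a y) ∨
       (relpos n D U a y < relpos n D U a x ∧ relpos n D U a x < relpos n D U a z) ∨
       (relpos n D U a z < relpos n D U a y ∧ relpos n D U a y < relpos n D U a x)) := by
  by_cases hz : z ≤ n + 2
  · rw [SB_base hUD hdisj ha hx hy hz]
    simp [hz]
  · exact ⟨fun hSB => absurd hSB.1 hz, fun h => absurd h.1 hz⟩

lemma bel_split_D (hUD : D ∪ U = Finset.Icc 1 (n + 1)) (hdisj : Disjoint D U)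
    {i j k : ℕ} (hij : i < j) (hjk : j < k) (hk : k ≤ n + 2) (hjD : j ∈ D) :
    bel n D U (i, k) = bel n D U (i, j) + bel n D U (j, k) + 1 := by
  classical
  have hj : j ≤ n + 2 := by omega
  have hi : i ≤ n + 2 := by omega
  have bk := (block_D hUD hdisj hjD hk).1 hjk
  have bi := (block_D hUD hdisj hjD hi).2 hij
  have hz0 : relpos n D U j j = 0 := relpos_self _
  have hjb := mem_D_bounds hUD hjD
  have hjU : j ∉ U := fun h => (Finset.disjoint_left.mp hdisj hjD) h
  have hri : relpos n D U j i ≠ 0 := relpos_ne_zero hUD hdisj hj hi (by omega)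
  have hrk : relpos n D U j k ≠ 0 := relpos_ne_zero hUD hdisj hj hk (by omega)
  have hC : Bel n D U (i, k) = (Bel n D U (i, j) ∪ Bel n D U (j, k)) ∪ {j} := by
    ext z
    simp only [Bel, Finset.mem_filter, Finset.mem_Icc, Finset.mem_union,
      Finset.mem_singleton]
    rw [SB_base2 hUD hdisj hj hi hk z, SB_base2 hUD hdisj hj hi hj z,
      SB_base2 hUD hdisj hj hj hk z]
    have g1 : z ≤ n + 2 → (relpos n D U j z = relpos n D U j i ↔ z = i) :=
      fun hh => relpos_inj_iff hUD hdisj hj hh hi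
    have g2 : z ≤ n + 2 → (relpos n D U j z = relpos n D U j k ↔ z = k) :=
      fun hh => relpos_inj_iff hUD hdisj hj hh hk
    have g3 : z ≤ n + 2 → (relpos n D U j z = 0 ↔ z = j) :=
      fun hh => relpos_eq_zero_iff hUD hdisj hj hh
    have lt1 := relpos_lt_N (n := n) (D := D) (U := U) j z
    have lt2 := relpos_lt_N (n := n) (D := D) (U := U) j i
    by_cases hzU : z ∈ U
    · have hzj : z ≠ j := fun hh => hjU (hh ▸ hzU)
      simp only [hzU, true_and]
      omega
    · simp only [hzU, false_and, and_false, or_false]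
      omega
  have hdAB : Disjoint (Bel n D U (i, j)) (Bel n D U (j, k)) := by
    rw [Finset.disjoint_left]
    intro z hz1 hz2
    simp only [Bel, Finset.mem_filter, Finset.mem_Icc] at hz1 hz2
    rw [SB_base2 hUD hdisj hj hi hj z] at hz1
    rw [SB_base2 hUD hdisj hj hj hk z] at hz2
    have g1 : z ≤ n + 2 → (relpos n D U j z = relpos n D U j i ↔ z = i) :=
      fun hh => relpos_inj_iff hUD hdisj hj hh hi
    have g2 : z ≤ n + 2 → (relpos n D U j z = relpos n D U j k ↔ z = k) :=
      fun hh => relpos_inj_iff hUD hdisj hj hh hk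
    have g3 : z ≤ n + 2 → (relpos n D U j z = 0 ↔ z = j) :=
      fun hh => relpos_eq_zero_iff hUD hdisj hj hh
    have lt1 := relpos_lt_N (n := n) (D := D) (U := U) j z
    by_cases hzU : z ∈ U
    · have hzj : z ≠ j := fun hh => hjU (hh ▸ hzU)
      simp only [hzU, true_and] at hz1 hz2
      omega
    · simp only [hzU, false_and, and_false, or_false] at hz1 hz2
      omega
  have hjAB : j ∉ Bel n D U (i, j) ∪ Bel n D U (j, k) := by
    intro hmem
    rcases Finset.mem_union.mp hmem with hm | hm <;>
      simp only [Bel, Finset.mem_filter, Finset.mem_Icc] at hm <;>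
      rcases hm.2 with hSB | ⟨hU', -⟩
    · rw [SB_base2 hUD hdisj hj hi hj j] at hSB
      omega
    · exact hjU hU'
    · rw [SB_base2 hUD hdisj hj hj hk j] at hSB
      omega
    · exact hjU hU'
  rw [bel, bel, bel, hC, Finset.card_union_of_disjoint
    (Finset.disjoint_singleton_right.mpr hjAB),
    Finset.card_union_of_disjoint hdAB, Finset.card_singleton]

lemma bel_split_U (hUD : D ∪ U = Finset.Icc 1 (n + 1)) (hdisj : Disjoint D U)
    {i j k : ℕ} (hij : i < j) (hjk : j < k) (hk : k ≤ n + 2) (hjU : j ∈ U) :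
    bel n D U (i, j) + bel n D U (j, k) = bel n D U (i, k) + (n + 2) := by
  classical
  have hj : j ≤ n + 2 := by omega
  have hi : i ≤ n + 2 := by omega
  have bk := (block_U hUD hdisj hjU hk).2 hjk
  have bi := (block_U hUD hdisj hjU hi).1 hij
  have hz0 : relpos n D U j j = 0 := relpos_self _
  have hjb := mem_U_bounds hUD hjU
  have hjD : j ∉ D := fun h => (Finset.disjoint_left.mp hdisj h) hjU
  have hri : relpos n D U j i ≠ 0 := relpos_ne_zero hUD hdisj hj hi (by omega)
  have hrk : relpos n D U j k ≠ 0 := relpos_ne_zero hUD hdisj hj hk (by omega)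
  have hUn : Bel n D U (i, j) ∪ Bel n D U (j, k) = Finset.Icc 1 (n + 1) := by
    ext z
    simp only [Bel, Finset.mem_filter, Finset.mem_Icc, Finset.mem_union]
    rw [SB_base2 hUD hdisj hj hi hj z, SB_base2 hUD hdisj hj hj hk z]
    have g3 : z ≤ n + 2 → (relpos n D U j z = 0 ↔ z = j) :=
      fun hh => relpos_eq_zero_iff hUD hdisj hj hh
    have lt1 := relpos_lt_N (n := n) (D := D) (U := U) j z
    by_cases hzU : z ∈ U
    · simp only [hzU, true_and]
      omega
    · have hzj : z ≠ j := fun hh => hzU (hh ▸ hjU)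
      simp only [hzU, false_and, and_false, or_false]
      omega
  have hInt : Bel n D U (i, j) ∩ Bel n D U (j, k) = insert j (Bel n D U (i, k)) := by
    ext z
    simp only [Bel, Finset.mem_filter, Finset.mem_Icc, Finset.mem_inter,
      Finset.mem_insert]
    rw [SB_base2 hUD hdisj hj hi hj z, SB_base2 hUD hdisj hj hj hk z,
      SB_base2 hUD hdisj hj hi hk z]
    have g1 : z ≤ n + 2 → (relpos n D U j z = relpos n D U j i ↔ z = i) :=
      fun hh => relpos_inj_iff hUD hdisj hj hh hi
    have g2 : z ≤ n + 2 → (relpos n D U j z = relpos n D U j k ↔ z = k) :=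
      fun hh => relpos_inj_iff hUD hdisj hj hh hk
    have g3 : z ≤ n + 2 → (relpos n D U j z = 0 ↔ z = j) :=
      fun hh => relpos_eq_zero_iff hUD hdisj hj hh
    have lt1 := relpos_lt_N (n := n) (D := D) (U := U) j z
    by_cases hzU : z ∈ U
    · simp only [hzU, true_and]
      omega
    · have hzj : z ≠ j := fun hh => hzU (hh ▸ hjU)
      simp only [hzU, false_and, and_false, or_false]
      omega
  have hjC : j ∉ Bel n D U (i, k) := by
    intro hm
    simp only [Bel, Finset.mem_filter, Finset.mem_Icc] at hm
    rcases hm.2 with hSB | ⟨-, hor⟩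
    · rw [SB_base2 hUD hdisj hj hi hk j] at hSB
      omega
    · omega
  have hcu := Finset.card_union_add_card_inter (Bel n D U (i, j)) (Bel n D U (j, k))
  rw [hUn, hInt, Finset.card_insert_of_notMem hjC, Nat.card_Icc] at hcu
  unfold bel
  omega

end BelL

end Spines
namespace Spines

section FlipL

variable {n : ℕ} {D U : Finset ℕ} {T T' : Finset (ℕ × ℕ)}

lemma esym_transfer {δ δ' : ℕ × ℕ} (hflip : T.erase δ = T'.erase δ')
    {x y : ℕ} (h : ESym n D U T x y) (hne : (min x y, max x y) ≠ δ) :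
    ESym n D U T' x y := by
  obtain ⟨n1, n2, n3, n4⟩ := h
  refine ⟨n1, n2, n3, ?_⟩
  rcases n4 with hmem | hb
  · have h1 : (min x y, max x y) ∈ T.erase δ := Finset.mem_erase.mpr ⟨hne, hmem⟩
    rw [hflip] at h1
    exact Or.inl (Finset.mem_of_mem_erase h1)
  · exact Or.inr hb

/-- Structure of a flip: the new diagonal joins the apexes of the two triangles
adjacent to the old diagonal, and the old endpoints are the apexes for the new one. -/
lemma flip_structure (hUD : D ∪ U = Finset.Icc 1 (n + 1)) (hdisj : Disjoint D U)
    (hT : IsTriangulation n D U T) (hT' : IsTriangulation n D U T')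
    {δ δ' : ℕ × ℕ} (hδ : δ ∈ T) (hδ' : δ' ∈ T') (hne : δ ≠ δ')
    (hflip : T.erase δ = T'.erase δ')
    {u w : ℕ} (hSBu : StrictBetween n D U δ.1 δ.2 u) (hTWu : TriWith n D U T δ u)
    (hSBw : StrictBetween n D U δ.2 δ.1 w) (hTWw : TriWith n D U T δ w) :
    (δ' = (u, w) ∨ δ' = (w, u)) ∧
      StrictBetween n D U u w δ.2 ∧ StrictBetween n D U w u δ.1 ∧
      TriWith n D U T' δ' δ.1 ∧ TriWith n D U T' δ' δ.2 := by
  obtain ⟨hab, hb, hr2, hrle⟩ := T_mem_facts hUD hdisj (hT.1 δ hδ)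
  have ha : δ.1 ≤ n + 2 := by omega
  set a := δ.1 with hadef
  set b := δ.2 with hbdef
  have hu : u ≤ n + 2 := hSBu.1
  have hw : w ≤ n + 2 := hSBw.1
  obtain ⟨hua, hub'⟩ := SB_ne hUD hdisj ha hb hSBu
  obtain ⟨hwb', hwa⟩ := SB_ne hUD hdisj hb ha hSBw
  -- r-coordinates from base a
  have hz : relpos n D U a a = 0 := relpos_self _
  have hm := relpos_lt_N (n := n) (D := D) (U := U) a b
  have hru1 : 0 < relpos n D U a u := by
    have := relpos_ne_zero hUD hdisj ha hu hua; omega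
  have hru2 : relpos n D U a u < relpos n D U a b := hSBu.2.2
  have hrw : relpos n D U a b < relpos n D U a w ∧ relpos n D U a w < n + 3 := by
    have h1 := relpos_lt_N (n := n) (D := D) (U := U) a w
    have h2 := hSBw
    rw [SB_base hUD hdisj ha hb ha hw] at h2
    omega
  have huw_ne : u ≠ w := by
    intro hh
    have : relpos n D U a u = relpos n D U a w := by rw [hh]
    omega
  -- the triangle edges of T around δ
  obtain ⟨eau, eub⟩ := triWith_elim hT hab hTWu
  obtain ⟨eaw, ewb⟩ := triWith_elim hT hab hTWw
  -- transferred edges in T'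
  have eau' : ESym n D U T' a u := esym_transfer hflip eau
    (by
    intro hh
    have h1 : δ.1 = min a u := by rw [← hh]
    have h2 : δ.2 = max a u := by rw [← hh]
    omega)
  have eub' : ESym n D U T' u b := esym_transfer hflip eub
    (by
    intro hh
    have h1 : δ.1 = min u b := by rw [← hh]
    have h2 : δ.2 = max u b := by rw [← hh]
    omega)
  have eaw' : ESym n D U T' a w := esym_transfer hflip eaw
    (by
    intro hh
    have h1 : δ.1 = min a w := by rw [← hh]
    have h2 : δ.2 = max a w := by rw [← hh]
    omega)
  have ewb' : ESym n D U T' w b := esym_transfer hflip ewb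
    (by
    intro hh
    have h1 : δ.1 = min w b := by rw [← hh]
    have h2 : δ.2 = max w b := by rw [← hh]
    omega)
  -- δ' ∉ T and δ crosses δ'
  have hδ'T : δ' ∉ T := by
    intro hmem
    have h1 : δ' ∈ T.erase δ := Finset.mem_erase.mpr ⟨hne.symm, hmem⟩
    rw [hflip] at h1
    exact Finset.notMem_erase δ' T' h1
  obtain ⟨hd'ab, hd'b, -, -⟩ := T_mem_facts hUD hdisj (hT'.1 δ' hδ')
  obtain ⟨ε, hεT, hcrs⟩ := hT.2.2 δ' (hT'.1 δ' hδ') hδ'T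
  have hεδ : ε = δ := by
    by_contra hc
    have h1 : ε ∈ T.erase δ := Finset.mem_erase.mpr ⟨hc, hεT⟩
    rw [hflip] at h1
    exact hT'.2.1 δ' hδ' ε (Finset.mem_of_mem_erase h1) hcrs
  rw [hεδ] at hcrs
  have hcd : Cross n D U δ δ' := cross_symm hUD hdisj (by omega) (by omega) ha hb hcrs
  -- identification of the endpoints of δ'
  have below_eq : ∀ p q : ℕ, ESym n D U T' p q →
      StrictBetween n D U a b p → StrictBetween n D U b a q → p = u := by
    intro p q hpq hp hq
    have hpb : p ≤ n + 2 := hp.1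
    have hqb : q ≤ n + 2 := hq.1
    obtain ⟨hpa, hpbne⟩ := SB_ne hUD hdisj ha hb hp
    obtain ⟨hqbne, hqa⟩ := SB_ne hUD hdisj hb ha hq
    have hrp1 : 0 < relpos n D U a p := by
      have := relpos_ne_zero hUD hdisj ha hpb hpa; omega
    have hrp2 : relpos n D U a p < relpos n D U a b := hp.2.2
    have hrq : relpos n D U a b < relpos n D U a q ∧ relpos n D U a q < n + 3 := by
      have h1 := relpos_lt_N (n := n) (D := D) (U := U) a q
      have h2 := hq
      rw [SB_base hUD hdisj ha hb ha hqb] at h2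
      omega
    by_contra hpu
    have hrpu : relpos n D U a p ≠ relpos n D U a u :=
      fun hh => hpu ((relpos_inj_iff hUD hdisj ha hpb hu).mp hh)
    have huq : u ≠ q := by
      intro hh
      have : relpos n D U a u = relpos n D U a q := by rw [hh]
      omega
    rcases lt_or_gt_of_ne hrpu with hlt | hlt
    · refine no_cross_esym hUD hdisj hT' eau' hpq
        ⟨hua.symm, hpq.1, ?_, hqa.symm, fun hh => hpu hh.symm, huq, Or.inl ⟨?_, ?_⟩⟩
      · show a ≠ p; exact hpa.symm
      · show StrictBetween n D U a u p
        rw [SB_base hUD hdisj ha ha hu hpb]; omega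
      · show StrictBetween n D U u a q
        rw [SB_base hUD hdisj ha hu ha hqb]; omega
    · refine no_cross_esym hUD hdisj hT' eub' hpq
        ⟨hub', hpq.1, fun hh => hpu hh.symm, huq, hpbne.symm, hqbne.symm, Or.inl ⟨?_, ?_⟩⟩
      · show StrictBetween n D U u b p
        rw [SB_base hUD hdisj ha hu hb hpb]; omega
      · show StrictBetween n D U b u q
        rw [SB_base hUD hdisj ha hb hu hqb]; omega
  have above_eq : ∀ p q : ℕ, ESym n D U T' p q →
      StrictBetween n D U a b p → StrictBetween n D U b a q → q = w := by
    intro p q hpq hp hq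
    have hpb : p ≤ n + 2 := hp.1
    have hqb : q ≤ n + 2 := hq.1
    obtain ⟨hpa, hpbne⟩ := SB_ne hUD hdisj ha hb hp
    obtain ⟨hqbne, hqa⟩ := SB_ne hUD hdisj hb ha hq
    have hrp1 : 0 < relpos n D U a p := by
      have := relpos_ne_zero hUD hdisj ha hpb hpa; omega
    have hrp2 : relpos n D U a p < relpos n D U a b := hp.2.2
    have hrq : relpos n D U a b < relpos n D U a q ∧ relpos n D U a q < n + 3 := by
      have h1 := relpos_lt_N (n := n) (D := D) (U := U) a q
      have h2 := hq
      rw [SB_base hUD hdisj ha hb ha hqb] at h2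
      omega
    by_contra hqw
    have hrqw : relpos n D U a q ≠ relpos n D U a w :=
      fun hh => hqw ((relpos_inj_iff hUD hdisj ha hqb hw).mp hh)
    have hwp : w ≠ p := by
      intro hh
      have : relpos n D U a w = relpos n D U a p := by rw [hh]
      omega
    rcases lt_or_gt_of_ne hrqw with hlt | hlt
    · refine no_cross_esym hUD hdisj hT' (esym_comm ewb') hpq
        ⟨hwb'.symm, hpq.1, hpbne.symm, hqbne.symm, hwp, fun hh => hqw hh.symm,
          Or.inr ⟨?_, ?_⟩⟩
      · show StrictBetween n D U b w q
        rw [SB_base hUD hdisj ha hb hw hqb]; omega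
      · show StrictBetween n D U w b p
        rw [SB_base hUD hdisj ha hw hb hpb]; omega
    · refine no_cross_esym hUD hdisj hT' eaw' hpq
        ⟨hwa.symm, hpq.1, hpa.symm, hqa.symm, hwp, fun hh => hqw hh.symm, Or.inl ⟨?_, ?_⟩⟩
      · show StrictBetween n D U a w p
        rw [SB_base hUD hdisj ha ha hw hpb]; omega
      · show StrictBetween n D U w a q
        rw [SB_base hUD hdisj ha hw ha hqb]; omega
  have hδ'id : δ' = (u, w) ∨ δ' = (w, u) := by
    rcases hcd.2.2.2.2.2.2 with ⟨hp, hq⟩ | ⟨hp, hq⟩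
    · left
      have h1 := below_eq δ'.1 δ'.2 (esym_of_mem hT' hδ') hp hq
      have h2 := above_eq δ'.1 δ'.2 (esym_of_mem hT' hδ') hp hq
      exact Prod.ext h1 h2
    · right
      have h1 := below_eq δ'.2 δ'.1 (esym_comm (esym_of_mem hT' hδ')) hp hq
      have h2 := above_eq δ'.2 δ'.1 (esym_comm (esym_of_mem hT' hδ')) hp hq
      exact Prod.ext h2 h1
  -- the strict betweenness facts for the new diagonal
  have hSBuwb : StrictBetween n D U u w b := by
    rw [SB_base hUD hdisj ha hu hw hb]; omega
  have hSBwua : StrictBetween n D U w u a := by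
    rw [SB_base hUD hdisj ha hw hu ha]; omega
  refine ⟨hδ'id, hSBuwb, hSBwua, ?_, ?_⟩
  · -- TriWith T' δ' a
    rcases hδ'id with h | h <;> rw [h]
    · exact triWith_of hT' (h ▸ hδ') (by simpa using hua.symm) (by simpa using hwa.symm)
        (by simpa using esym_comm eau') (by simpa using eaw')
    · exact triWith_of hT' (h ▸ hδ') (by simpa using hwa.symm) (by simpa using hua.symm)
        (by simpa using esym_comm eaw') (by simpa using eau')
  · -- TriWith T' δ' b
    rcases hδ'id with h | h <;> rw [h]
    · exact triWith_of hT' (h ▸ hδ') (by simpa using hub'.symm) (by simpa using hwb'.symm)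
        (by simpa using eub') (by simpa using esym_comm ewb')
    · exact triWith_of hT' (h ▸ hδ') (by simpa using hwb'.symm) (by simpa using hub'.symm)
        (by simpa using ewb') (by simpa using esym_comm eub')

end FlipL

end Spines
namespace Spines

section MidEdge

variable {n : ℕ} {D U : Finset ℕ} {T : Finset (ℕ × ℕ)}

/-- If a triangle of `T` uses the diagonal `δ` as one of its edges, then its middle
vertex is the middle of one of the two triangles adjacent to `δ`. -/
lemma mid_of_delta_edge (hUD : D ∪ U = Finset.Icc 1 (n + 1)) (hdisj : Disjoint D U)
    (hT : IsTriangulation n D U T) {δ : ℕ × ℕ} (hδ : δ ∈ T)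
    {u w : ℕ} (hSBu : StrictBetween n D U δ.1 δ.2 u) (hTWu : TriWith n D U T δ u)
    (hSBw : StrictBetween n D U δ.2 δ.1 w) (hTWw : TriWith n D U T δ w)
    {i m k : ℕ} (htri : IsTriangleOf n D U T i m k)
    (hedge : (i, m) = δ ∨ (m, k) = δ ∨ (i, k) = δ) :
    m = midOf δ.1 δ.2 u ∨ m = midOf δ.1 δ.2 w := by
  obtain ⟨hab, hb, hr2, hrle⟩ := T_mem_facts hUD hdisj (hT.1 δ hδ)
  have ha : δ.1 ≤ n + 2 := by omega
  obtain ⟨fu1, fu2⟩ := triWith_elim hT hab hTWu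
  obtain ⟨fw1, fw2⟩ := triWith_elim hT hab hTWw
  have hu : u ≤ n + 2 := hSBu.1
  have hw : w ≤ n + 2 := hSBw.1
  obtain ⟨hua, hub⟩ := SB_ne hUD hdisj ha hb hSBu
  obtain ⟨hwb, hwa⟩ := SB_ne hUD hdisj hb ha hSBw
  have him := htri.1
  have hmk := htri.2.1
  have hkb := htri.2.2.1
  obtain ⟨e1, e2, e3⟩ := triangle_esym htri
  rcases hedge with hh | hh | hh
  · -- the triangle is (δ.1, δ.2, k)
    have h1 : δ.1 = i := by rw [← hh]
    have h2 : δ.2 = m := by rw [← hh]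
    subst h1; subst h2
    have hk1 : k ≠ δ.1 := by omega
    have hk2 : k ≠ δ.2 := by omega
    have hz1 : relpos n D U δ.1 k ≠ 0 := relpos_ne_zero hUD hdisj ha hkb hk1
    have hz2 : relpos n D U δ.1 k ≠ relpos n D U δ.1 δ.2 :=
      fun hx => hk2 ((relpos_inj_iff hUD hdisj ha hkb hb).mp hx)
    have hlt := relpos_lt_N (n := n) (D := D) (U := U) δ.1 k
    have hside : StrictBetween n D U δ.1 δ.2 k ∨ StrictBetween n D U δ.2 δ.1 k := by
      rw [SB_base hUD hdisj ha ha hb hkb, SB_base hUD hdisj ha hb ha hkb]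
      have hz : relpos n D U δ.1 δ.1 = 0 := relpos_self _
      have hm := relpos_lt_N (n := n) (D := D) (U := U) δ.1 δ.2
      omega
    rcases hside with hs | hs
    · have hk : k = u := adj_tri_unique hUD hdisj hT ha hb
        ⟨hs, e3, esym_comm e2⟩ ⟨hSBu, fu1, fu2⟩
      left
      subst hk
      unfold midOf
      split_ifs <;> omega
    · have hk : k = w := adj_tri_unique hUD hdisj hT hb ha
        ⟨hs, e2, esym_comm e3⟩ ⟨hSBw, esym_comm fw2, esym_comm fw1⟩
      right
      subst hk
      unfold midOf
      split_ifs <;> omega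
  · -- the triangle is (i, δ.1, δ.2)
    have h1 : δ.1 = m := by rw [← hh]
    have h2 : δ.2 = k := by rw [← hh]
    subst h1; subst h2
    have hi1 : i ≠ δ.1 := by omega
    have hi2 : i ≠ δ.2 := by omega
    have hib : i ≤ n + 2 := by omega
    have hz1 : relpos n D U δ.1 i ≠ 0 := relpos_ne_zero hUD hdisj ha hib hi1
    have hz2 : relpos n D U δ.1 i ≠ relpos n D U δ.1 δ.2 :=
      fun hx => hi2 ((relpos_inj_iff hUD hdisj ha hib hb).mp hx)
    have hlt := relpos_lt_N (n := n) (D := D) (U := U) δ.1 i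
    have hside : StrictBetween n D U δ.1 δ.2 i ∨ StrictBetween n D U δ.2 δ.1 i := by
      rw [SB_base hUD hdisj ha ha hb hib, SB_base hUD hdisj ha hb ha hib]
      have hz : relpos n D U δ.1 δ.1 = 0 := relpos_self _
      have hm := relpos_lt_N (n := n) (D := D) (U := U) δ.1 δ.2
      omega
    rcases hside with hs | hs
    · have hk : i = u := adj_tri_unique hUD hdisj hT ha hb
        ⟨hs, esym_comm e1, e3⟩ ⟨hSBu, fu1, fu2⟩
      left
      subst hk
      unfold midOf
      split_ifs <;> omega
    · have hk : i = w := adj_tri_unique hUD hdisj hT hb ha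
        ⟨hs, esym_comm e3, e1⟩ ⟨hSBw, esym_comm fw2, esym_comm fw1⟩
      right
      subst hk
      unfold midOf
      split_ifs <;> omega
  · -- the triangle is (δ.1, m, δ.2)
    have h1 : δ.1 = i := by rw [← hh]
    have h2 : δ.2 = k := by rw [← hh]
    subst h1; subst h2
    have hm1 : m ≠ δ.1 := by omega
    have hm2 : m ≠ δ.2 := by omega
    have hmb : m ≤ n + 2 := by omega
    have hz1 : relpos n D U δ.1 m ≠ 0 := relpos_ne_zero hUD hdisj ha hmb hm1
    have hz2 : relpos n D U δ.1 m ≠ relpos n D U δ.1 δ.2 :=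
      fun hx => hm2 ((relpos_inj_iff hUD hdisj ha hmb hb).mp hx)
    have hlt := relpos_lt_N (n := n) (D := D) (U := U) δ.1 m
    have hside : StrictBetween n D U δ.1 δ.2 m ∨ StrictBetween n D U δ.2 δ.1 m := by
      rw [SB_base hUD hdisj ha ha hb hmb, SB_base hUD hdisj ha hb ha hmb]
      have hz : relpos n D U δ.1 δ.1 = 0 := relpos_self _
      have hm' := relpos_lt_N (n := n) (D := D) (U := U) δ.1 δ.2
      omega
    rcases hside with hs | hs
    · have hk : m = u := adj_tri_unique hUD hdisj hT ha hb
        ⟨hs, e1, e2⟩ ⟨hSBu, fu1, fu2⟩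
      left
      subst hk
      unfold midOf
      split_ifs <;> omega
    · have hk : m = w := adj_tri_unique hUD hdisj hT hb ha
        ⟨hs, esym_comm e2, esym_comm e1⟩ ⟨hSBw, esym_comm fw2, esym_comm fw1⟩
      right
      subst hk
      unfold midOf
      split_ifs <;> omega

end MidEdge

end Spines
namespace Spines

section MainL

variable {n : ℕ} {D U : Finset ℕ}

lemma main_flip (hUD : D ∪ U = Finset.Icc 1 (n + 1)) (hdisj : Disjoint D U)
    {T T' : Finset (ℕ × ℕ)} (hT : IsTriangulation n D U T) (hT' : IsTriangulation n D U T')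
    {δ δ' : ℕ × ℕ} (hδ : δ ∈ T) (hδ' : δ' ∈ T') (hne : δ ≠ δ')
    (hflip : T.erase δ = T'.erase δ')
    {u w : ℕ} (hSBu : StrictBetween n D U δ.1 δ.2 u) (hTWu : TriWith n D U T δ u)
    (hSBw : StrictBetween n D U δ.2 δ.1 w) (hTWw : TriWith n D U T δ w)
    (huw : u < w) :
    spineSrc n D U T' δ' = spineTgt n D U T δ ∧
    spineTgt n D U T' δ' = spineSrc n D U T δ ∧
    ∃ α : ℝ, 0 < α ∧ ∀ m : ℕ,
      xcoord n D U T' m - xcoord n D U T m =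
        α * ((if m = spineSrc n D U T δ then (1 : ℝ) else 0) -
             (if m = spineTgt n D U T δ then (1 : ℝ) else 0)) := by
  obtain ⟨hδ'id, hSBuwb, hSBwua, hTW'a, hTW'b⟩ :=
    flip_structure hUD hdisj hT hT' hδ hδ' hne hflip hSBu hTWu hSBw hTWw
  obtain ⟨hab, hb, hr2, hrle⟩ := T_mem_facts hUD hdisj (hT.1 δ hδ)
  have ha : δ.1 ≤ n + 2 := by omega
  have hu : u ≤ n + 2 := hSBu.1
  have hw : w ≤ n + 2 := hSBw.1
  obtain ⟨hua, hub⟩ := SB_ne hUD hdisj ha hb hSBu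
  obtain ⟨hwb, hwa⟩ := SB_ne hUD hdisj hb ha hSBw
  have hz : relpos n D U δ.1 δ.1 = 0 := relpos_self _
  have hmN := relpos_lt_N (n := n) (D := D) (U := U) δ.1 δ.2
  have hru1 : 0 < relpos n D U δ.1 u := by
    have := relpos_ne_zero hUD hdisj ha hu hua; omega
  have hru2 := hSBu.2.2
  have hrw : relpos n D U δ.1 δ.2 < relpos n D U δ.1 w ∧ relpos n D U δ.1 w < n + 3 := by
    have h1 := relpos_lt_N (n := n) (D := D) (U := U) δ.1 w
    have h2 := hSBw
    rw [SB_base hUD hdisj ha hb ha hw] at h2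
    omega
  have hδ'eq : δ' = (u, w) := by
    rcases hδ'id with h | h
    · exact h
    · exfalso
      obtain ⟨hlt, -, -, -⟩ := T_mem_facts hUD hdisj (hT'.1 δ' hδ')
      rw [h] at hlt
      simp only at hlt
      omega
  subst hδ'eq
  have hub2 : u < δ.2 := by
    rcases lt_or_gt_of_ne hub with h | h
    · exact h
    · exfalso
      have hbU : δ.2 ∈ U := (mid_type hUD hdisj hab h hu).2.mpr
        (by rw [SB_base hUD hdisj ha hu ha hb]; omega)
      have hbD : δ.2 ∈ D := (mid_type hUD hdisj hab (lt_trans h huw) hw).1.mpr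
        (by rw [SB_base hUD hdisj ha ha hw hb]; omega)
      exact (Finset.disjoint_left.mp hdisj hbD) hbU
  have haw2 : δ.1 < w := by
    rcases lt_or_gt_of_ne hwa with h | h
    · exfalso
      have haU : δ.1 ∈ U := (mid_type hUD hdisj (lt_trans huw h) hab hb).2.mpr
        (by rw [SB_base hUD hdisj ha hb hu ha]; omega)
      have haD : δ.1 ∈ D := (mid_type hUD hdisj h hab hb).1.mpr
        (by rw [SB_base hUD hdisj ha hw hb ha]; omega)
      exact (Finset.disjoint_left.mp hdisj haD) haU
    · exact h
  have hSBawb : StrictBetween n D U δ.1 w δ.2 := by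
    rw [SB_base hUD hdisj ha ha hw hb]; omega
  have hSBbua : StrictBetween n D U δ.2 u δ.1 := by
    rw [SB_base hUD hdisj ha hb hu ha]; omega
  -- the edges of the quadrilateral
  have eab : ESym n D U T δ.1 δ.2 := esym_of_mem hT hδ
  obtain ⟨eau, eub⟩ := triWith_elim hT hab hTWu
  obtain ⟨eaw, ewb⟩ := triWith_elim hT hab hTWw
  have euw' : ESym n D U T' u w := esym_of_mem hT' hδ'
  have eau' : ESym n D U T' δ.1 u := esym_transfer hflip eau (by
    intro hh
    have h1 : min δ.1 u = δ.1 := congrArg Prod.fst hh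
    have h2 : max δ.1 u = δ.2 := congrArg Prod.snd hh
    omega)
  have eub' : ESym n D U T' u δ.2 := esym_transfer hflip eub (by
    intro hh
    have h1 : min u δ.2 = δ.1 := congrArg Prod.fst hh
    have h2 : max u δ.2 = δ.2 := congrArg Prod.snd hh
    omega)
  have eaw' : ESym n D U T' δ.1 w := esym_transfer hflip eaw (by
    intro hh
    have h1 : min δ.1 w = δ.1 := congrArg Prod.fst hh
    have h2 : max δ.1 w = δ.2 := congrArg Prod.snd hh
    omega)
  have ewb' : ESym n D U T' w δ.2 := esym_transfer hflip ewb (by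
    intro hh
    have h1 : min w δ.2 = δ.1 := congrArg Prod.fst hh
    have h2 : max w δ.2 = δ.2 := congrArg Prod.snd hh
    omega)
  -- spine values
  have hsT : spineSrc n D U T δ = midOf δ.1 δ.2 u := spineSrc_eq hUD hdisj hT hδ hSBu hTWu
  have htT : spineTgt n D U T δ = midOf δ.1 δ.2 w := spineTgt_eq hUD hdisj hT hδ hSBw hTWw
  have hsT' : spineSrc n D U T' (u, w) = midOf u w δ.2 :=
    spineSrc_eq hUD hdisj hT' hδ' hSBuwb hTW'b
  have htT' : spineTgt n D U T' (u, w) = midOf u w δ.1 :=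
    spineTgt_eq hUD hdisj hT' hδ' hSBwua hTW'a
  have hmid1 : midOf u w δ.2 = midOf δ.1 δ.2 w := by unfold midOf; split_ifs <;> omega
  have hmid2 : midOf u w δ.1 = midOf δ.1 δ.2 u := by unfold midOf; split_ifs <;> omega
  refine ⟨by rw [hsT', htT, hmid1], by rw [htT', hsT, hmid2], ?_⟩
  have hflip' : T'.erase (u, w) = T.erase δ := hflip.symm
  have hsame : ∀ m, m ≠ midOf δ.1 δ.2 u → m ≠ midOf δ.1 δ.2 w →
      xcoord n D U T' m = xcoord n D U T m := by
    intro m hm1 hm2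
    by_cases hex : ∃ p : ℕ × ℕ, IsTriangleOf n D U T p.1 m p.2
    · obtain ⟨⟨i, k⟩, htri⟩ := hex
      have hnd : ¬ ((i, m) = δ ∨ (m, k) = δ ∨ (i, k) = δ) := by
        intro hh
        rcases mid_of_delta_edge hUD hdisj hT hδ hSBu hTWu hSBw hTWw htri hh with h | h
        · exact hm1 h
        · exact hm2 h
      push_neg at hnd
      obtain ⟨g1, g2, g3⟩ := hnd
      obtain ⟨e1, e2, e3⟩ := triangle_esym htri
      have him := htri.1
      have hmk := htri.2.1
      have hkb := htri.2.2.1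
      have htri2 : IsTriangleOf n D U T' i m k := isTriangleOf_of_esym him hmk hkb
        (esym_transfer hflip e1 (by
          rw [min_eq_left (le_of_lt him), max_eq_right (le_of_lt him)]; exact g1))
        (esym_transfer hflip e2 (by
          rw [min_eq_left (le_of_lt hmk), max_eq_right (le_of_lt hmk)]; exact g2))
        (esym_transfer hflip e3 (by
          rw [min_eq_left (by omega : i ≤ k), max_eq_right (by omega : i ≤ k)]; exact g3))
      rw [xcoord_tri hUD hdisj hT' htri2, xcoord_tri hUD hdisj hT htri]
    · have hex' : ¬ ∃ p : ℕ × ℕ, IsTriangleOf n D U T' p.1 m p.2 := by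
        rintro ⟨⟨i, k⟩, htri'⟩
        apply hex
        have hnd : ¬ ((i, m) = ((u, w) : ℕ × ℕ) ∨ (m, k) = ((u, w) : ℕ × ℕ) ∨
            (i, k) = ((u, w) : ℕ × ℕ)) := by
          intro hh
          rcases mid_of_delta_edge hUD hdisj hT' hδ' hSBuwb hTW'b hSBwua hTW'a htri' hh
            with h | h
          · exact hm2 (h.trans hmid1)
          · exact hm1 (h.trans hmid2)
        push_neg at hnd
        obtain ⟨g1, g2, g3⟩ := hnd
        obtain ⟨e1, e2, e3⟩ := triangle_esym htri'
        have him := htri'.1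
        have hmk := htri'.2.1
        have hkb := htri'.2.2.1
        refine ⟨(i, k), isTriangleOf_of_esym him hmk hkb
          (esym_transfer hflip' e1 (by
            rw [min_eq_left (le_of_lt him), max_eq_right (le_of_lt him)]; exact g1))
          (esym_transfer hflip' e2 (by
            rw [min_eq_left (le_of_lt hmk), max_eq_right (le_of_lt hmk)]; exact g2))
          (esym_transfer hflip' e3 (by
            rw [min_eq_left (by omega : i ≤ k), max_eq_right (by omega : i ≤ k)]; exact g3))⟩
      simp only [xcoord]
      rw [dif_neg hex', dif_neg hex]
  rcases lt_or_gt_of_ne hua with hua1 | h_au <;> rcases lt_or_gt_of_ne hwb with hwb2 | hbw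
  · -- Branch D: u < δ.1 < w < δ.2
    have haU : δ.1 ∈ U := (mid_type hUD hdisj hua1 hab hb).2.mpr hSBbua
    have hwU : w ∈ U := (mid_type hUD hdisj haw2 hwb2 hb).2.mpr hSBw
    have hanD : δ.1 ∉ D := fun h => (Finset.disjoint_left.mp hdisj h) haU
    have hwnD : w ∉ D := fun h => (Finset.disjoint_left.mp hdisj h) hwU
    have hmou : midOf δ.1 δ.2 u = δ.1 := by unfold midOf; split_ifs <;> omega
    have hmow : midOf δ.1 δ.2 w = w := by unfold midOf; split_ifs <;> omega
    have hss : spineSrc n D U T δ = δ.1 := hsT.trans hmou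
    have htt : spineTgt n D U T δ = w := htT.trans hmow
    have Q1 : IsTriangleOf n D U T u δ.1 δ.2 :=
      isTriangleOf_of_esym hua1 hab hb (esym_comm eau) eab eub
    have Q2 : IsTriangleOf n D U T δ.1 w δ.2 :=
      isTriangleOf_of_esym haw2 hwb2 hb eaw ewb eab
    have Q3 : IsTriangleOf n D U T' u w δ.2 :=
      isTriangleOf_of_esym huw hwb2 hb euw' ewb' eub'
    have Q4 : IsTriangleOf n D U T' u δ.1 w :=
      isTriangleOf_of_esym hua1 haw2 hw (esym_comm eau') eaw' euw'
    have R1 := bel_split_U hUD hdisj haw2 hwb2 hb hwU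
    have R2 := bel_split_U hUD hdisj hua1 haw2 hw haU
    have R1' : (bel n D U (δ.1, w) : ℝ) + bel n D U (w, δ.2)
        = bel n D U (δ.1, δ.2) + (n + 2) := by exact_mod_cast R1
    have R2' : (bel n D U (u, δ.1) : ℝ) + bel n D U (δ.1, w)
        = bel n D U (u, w) + (n + 2) := by exact_mod_cast R2
    have hbl1 : (bel n D U (u, δ.1) : ℝ) ≤ n + 1 := by exact_mod_cast bel_le _
    have hbl2 : (bel n D U (w, δ.2) : ℝ) ≤ n + 1 := by exact_mod_cast bel_le _
    refine ⟨((n : ℝ) + 2 - bel n D U (u, δ.1)) * ((n : ℝ) + 2 - bel n D U (w, δ.2)),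
      mul_pos (by linarith) (by linarith), ?_⟩
    intro m
    rw [hss, htt]
    by_cases hm1 : m = δ.1
    · rw [hm1, if_pos rfl, if_neg (by omega)]
      rw [xcoord_tri hUD hdisj hT' Q4, xcoord_tri hUD hdisj hT Q1,
        if_neg hanD, if_neg hanD]
      linear_combination ((n : ℝ) + 2 - bel n D U (u, δ.1)) * R1'
    · by_cases hm2 : m = w
      · rw [hm2, if_neg (by omega), if_pos rfl]
        rw [xcoord_tri hUD hdisj hT' Q3, xcoord_tri hUD hdisj hT Q2,
          if_neg hwnD, if_neg hwnD]
        linear_combination (-((n : ℝ) + 2 - bel n D U (w, δ.2))) * R2'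
      · rw [if_neg hm1, if_neg hm2,
          hsame m (by rw [hmou]; exact hm1) (by rw [hmow]; exact hm2)]
        ring
  · -- Branch C: u < δ.1 < δ.2 < w
    have haU : δ.1 ∈ U := (mid_type hUD hdisj hua1 hab hb).2.mpr hSBbua
    have hbD : δ.2 ∈ D := (mid_type hUD hdisj hab hbw hw).1.mpr hSBawb
    have hanD : δ.1 ∉ D := fun h => (Finset.disjoint_left.mp hdisj h) haU
    have hmou : midOf δ.1 δ.2 u = δ.1 := by unfold midOf; split_ifs <;> omega
    have hmow : midOf δ.1 δ.2 w = δ.2 := by unfold midOf; split_ifs <;> omega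
    have hss : spineSrc n D U T δ = δ.1 := hsT.trans hmou
    have htt : spineTgt n D U T δ = δ.2 := htT.trans hmow
    have Q1 : IsTriangleOf n D U T u δ.1 δ.2 :=
      isTriangleOf_of_esym hua1 hab hb (esym_comm eau) eab eub
    have Q2 : IsTriangleOf n D U T δ.1 δ.2 w :=
      isTriangleOf_of_esym hab hbw hw eab (esym_comm ewb) eaw
    have Q3 : IsTriangleOf n D U T' u δ.2 w :=
      isTriangleOf_of_esym hub2 hbw hw eub' (esym_comm ewb') euw'
    have Q4 : IsTriangleOf n D U T' u δ.1 w :=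
      isTriangleOf_of_esym hua1 haw2 hw (esym_comm eau') eaw' euw'
    have R1 := bel_split_D hUD hdisj hab hbw hw hbD
    have R2 := bel_split_U hUD hdisj hua1 hab hb haU
    have R1' : (bel n D U (δ.1, w) : ℝ)
        = bel n D U (δ.1, δ.2) + bel n D U (δ.2, w) + 1 := by exact_mod_cast R1
    have R2' : (bel n D U (u, δ.1) : ℝ) + bel n D U (δ.1, δ.2)
        = bel n D U (u, δ.2) + (n + 2) := by exact_mod_cast R2
    have hbl1 : (bel n D U (u, δ.1) : ℝ) ≤ n + 1 := by exact_mod_cast bel_le _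
    refine ⟨((n : ℝ) + 2 - bel n D U (u, δ.1)) * ((bel n D U (δ.2, w) : ℝ) + 1),
      mul_pos (by linarith) (by positivity), ?_⟩
    intro m
    rw [hss, htt]
    by_cases hm1 : m = δ.1
    · rw [hm1, if_pos rfl, if_neg (by omega)]
      rw [xcoord_tri hUD hdisj hT' Q4, xcoord_tri hUD hdisj hT Q1,
        if_neg hanD, if_neg hanD]
      linear_combination ((n : ℝ) + 2 - bel n D U (u, δ.1)) * R1'
    · by_cases hm2 : m = δ.2
      · rw [hm2, if_neg (by omega), if_pos rfl]
        rw [xcoord_tri hUD hdisj hT' Q3, xcoord_tri hUD hdisj hT Q2,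
          if_pos hbD, if_pos hbD]
        linear_combination (-((bel n D U (δ.2, w) : ℝ) + 1)) * R2'
      · rw [if_neg hm1, if_neg hm2,
          hsame m (by rw [hmou]; exact hm1) (by rw [hmow]; exact hm2)]
        ring
  · -- Branch B: δ.1 < u < w < δ.2
    have huD : u ∈ D := (mid_type hUD hdisj h_au hub2 hb).1.mpr hSBu
    have hwU : w ∈ U := (mid_type hUD hdisj haw2 hwb2 hb).2.mpr hSBw
    have hwnD : w ∉ D := fun h => (Finset.disjoint_left.mp hdisj h) hwU
    have hmou : midOf δ.1 δ.2 u = u := by unfold midOf; split_ifs <;> omega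
    have hmow : midOf δ.1 δ.2 w = w := by unfold midOf; split_ifs <;> omega
    have hss : spineSrc n D U T δ = u := hsT.trans hmou
    have htt : spineTgt n D U T δ = w := htT.trans hmow
    have Q1 : IsTriangleOf n D U T δ.1 u δ.2 :=
      isTriangleOf_of_esym h_au hub2 hb eau eub eab
    have Q2 : IsTriangleOf n D U T δ.1 w δ.2 :=
      isTriangleOf_of_esym haw2 hwb2 hb eaw ewb eab
    have Q3 : IsTriangleOf n D U T' u w δ.2 :=
      isTriangleOf_of_esym huw hwb2 hb euw' ewb' eub'
    have Q4 : IsTriangleOf n D U T' δ.1 u w :=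
      isTriangleOf_of_esym h_au huw hw eau' euw' eaw'
    have R1 := bel_split_U hUD hdisj huw hwb2 hb hwU
    have R2 := bel_split_D hUD hdisj h_au huw hw huD
    have R1' : (bel n D U (u, w) : ℝ) + bel n D U (w, δ.2)
        = bel n D U (u, δ.2) + (n + 2) := by exact_mod_cast R1
    have R2' : (bel n D U (δ.1, w) : ℝ)
        = bel n D U (δ.1, u) + bel n D U (u, w) + 1 := by exact_mod_cast R2
    have hbl2 : (bel n D U (w, δ.2) : ℝ) ≤ n + 1 := by exact_mod_cast bel_le _
    refine ⟨((bel n D U (δ.1, u) : ℝ) + 1) * ((n : ℝ) + 2 - bel n D U (w, δ.2)),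
      mul_pos (by positivity) (by linarith), ?_⟩
    intro m
    rw [hss, htt]
    by_cases hm1 : m = u
    · rw [hm1, if_pos rfl, if_neg (by omega)]
      rw [xcoord_tri hUD hdisj hT' Q4, xcoord_tri hUD hdisj hT Q1,
        if_pos huD, if_pos huD]
      linear_combination ((bel n D U (δ.1, u) : ℝ) + 1) * R1'
    · by_cases hm2 : m = w
      · rw [hm2, if_neg (by omega), if_pos rfl]
        rw [xcoord_tri hUD hdisj hT' Q3, xcoord_tri hUD hdisj hT Q2,
          if_neg hwnD, if_neg hwnD]
        linear_combination (-((n : ℝ) + 2 - bel n D U (w, δ.2))) * R2'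
      · rw [if_neg hm1, if_neg hm2,
          hsame m (by rw [hmou]; exact hm1) (by rw [hmow]; exact hm2)]
        ring
  · -- Branch A: δ.1 < u < δ.2 < w
    have huD : u ∈ D := (mid_type hUD hdisj h_au hub2 hb).1.mpr hSBu
    have hbD : δ.2 ∈ D := (mid_type hUD hdisj hab hbw hw).1.mpr hSBawb
    have hmou : midOf δ.1 δ.2 u = u := by unfold midOf; split_ifs <;> omega
    have hmow : midOf δ.1 δ.2 w = δ.2 := by unfold midOf; split_ifs <;> omega
    have hss : spineSrc n D U T δ = u := hsT.trans hmou
    have htt : spineTgt n D U T δ = δ.2 := htT.trans hmow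
    have Q1 : IsTriangleOf n D U T δ.1 u δ.2 :=
      isTriangleOf_of_esym h_au hub2 hb eau eub eab
    have Q2 : IsTriangleOf n D U T δ.1 δ.2 w :=
      isTriangleOf_of_esym hab hbw hw eab (esym_comm ewb) eaw
    have Q3 : IsTriangleOf n D U T' u δ.2 w :=
      isTriangleOf_of_esym hub2 hbw hw eub' (esym_comm ewb') euw'
    have Q4 : IsTriangleOf n D U T' δ.1 u w :=
      isTriangleOf_of_esym h_au huw hw eau' euw' eaw'
    have R1 := bel_split_D hUD hdisj hub2 hbw hw hbD
    have R2 := bel_split_D hUD hdisj h_au hub2 hb huD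
    have R1' : (bel n D U (u, w) : ℝ)
        = bel n D U (u, δ.2) + bel n D U (δ.2, w) + 1 := by exact_mod_cast R1
    have R2' : (bel n D U (δ.1, δ.2) : ℝ)
        = bel n D U (δ.1, u) + bel n D U (u, δ.2) + 1 := by exact_mod_cast R2
    refine ⟨((bel n D U (δ.1, u) : ℝ) + 1) * ((bel n D U (δ.2, w) : ℝ) + 1),
      by positivity, ?_⟩
    intro m
    rw [hss, htt]
    by_cases hm1 : m = u
    · rw [hm1, if_pos rfl, if_neg (by omega)]
      rw [xcoord_tri hUD hdisj hT' Q4, xcoord_tri hUD hdisj hT Q1,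
        if_pos huD, if_pos huD]
      linear_combination ((bel n D U (δ.1, u) : ℝ) + 1) * R1'
    · by_cases hm2 : m = δ.2
      · rw [hm2, if_neg (by omega), if_pos rfl]
        rw [xcoord_tri hUD hdisj hT' Q3, xcoord_tri hUD hdisj hT Q2,
          if_pos hbD, if_pos hbD]
        linear_combination (-((bel n D U (δ.2, w) : ℝ) + 1)) * R2'
      · rw [if_neg hm1, if_neg hm2,
          hsame m (by rw [hmou]; exact hm1) (by rw [hmow]; exact hm2)]
        ring

end MainL

end Spines
namespace Spines

/-- If `T` and `T̃` are related by a flip exchanging `δ ∈ T` for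
`δ̃ ∈ T̃`, and `(i,j) = (s_δ, t_δ)` is the spine arc of `δ` in `T`, then the spine arc
of `δ̃` in `T̃` is `(j,i)`, and `x(T̃) − x(T) = α (e_i − e_j)` for some `α > 0`. -/
theorem flip_reverses_arc_and_moves_along_e (n : ℕ) (hn : 1 ≤ n) (D U : Finset ℕ)
    (hUD : D ∪ U = Finset.Icc 1 (n + 1)) (hdisj : Disjoint D U)
    (T T' : Finset (ℕ × ℕ)) (hT : IsTriangulation n D U T) (hT' : IsTriangulation n D U T')
    (δ δ' : ℕ × ℕ) (hδ : δ ∈ T) (hδ' : δ' ∈ T') (hne : δ ≠ δ')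
    (hflip : T.erase δ = T'.erase δ') :
    spineSrc n D U T' δ' = spineTgt n D U T δ ∧
    spineTgt n D U T' δ' = spineSrc n D U T δ ∧
    ∃ α : ℝ, 0 < α ∧ ∀ m : ℕ,
      xcoord n D U T' m - xcoord n D U T m =
        α * ((if m = spineSrc n D U T δ then (1 : ℝ) else 0) -
             (if m = spineTgt n D U T δ then (1 : ℝ) else 0)) := by
  obtain ⟨u, w, hSBu, hTWu, hSBw, hTWw⟩ := spine_exists hUD hdisj hT hδ
  obtain ⟨hab, hb, hr2, hrle⟩ := T_mem_facts hUD hdisj (hT.1 δ hδ)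
  have ha : δ.1 ≤ n + 2 := by omega
  have hu : u ≤ n + 2 := hSBu.1
  have hw : w ≤ n + 2 := hSBw.1
  obtain ⟨hua, hub⟩ := SB_ne hUD hdisj ha hb hSBu
  have hru1 : 0 < relpos n D U δ.1 u := by
    have := relpos_ne_zero hUD hdisj ha hu hua; omega
  have hru2 := hSBu.2.2
  have hrw : relpos n D U δ.1 δ.2 < relpos n D U δ.1 w := by
    have h2 := hSBw
    have hz : relpos n D U δ.1 δ.1 = 0 := relpos_self _
    have h1 := relpos_lt_N (n := n) (D := D) (U := U) δ.1 w
    rw [SB_base hUD hdisj ha hb ha hw] at h2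
    omega
  have huw_ne : u ≠ w := by
    intro hh
    have : relpos n D U δ.1 u = relpos n D U δ.1 w := by rw [hh]
    omega
  rcases lt_or_gt_of_ne huw_ne with huw | huw
  · exact main_flip hUD hdisj hT hT' hδ hδ' hne hflip hSBu hTWu hSBw hTWw huw
  · obtain ⟨hδ'id, hSBuwb, hSBwua, hTW'a, hTW'b⟩ :=
      flip_structure hUD hdisj hT hT' hδ hδ' hne hflip hSBu hTWu hSBw hTWw
    have hδ'eq : δ' = (w, u) := by
      rcases hδ'id with h | h
      · exfalso
        obtain ⟨hlt, -, -, -⟩ := T_mem_facts hUD hdisj (hT'.1 δ' hδ')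
        rw [h] at hlt
        simp only at hlt
        omega
      · exact h
    subst hδ'eq
    obtain ⟨c1, c2, α, hαpos, hα⟩ :=
      main_flip hUD hdisj hT' hT hδ' hδ (Ne.symm hne) hflip.symm
        (u := δ.1) (w := δ.2) hSBwua hTW'a hSBuwb hTW'b hab
    refine ⟨c2.symm, c1.symm, α, hαpos, fun m => ?_⟩
    have h := hα m
    rw [← c2, ← c1] at h
    rw [show xcoord n D U T' m - xcoord n D U T m
        = -(xcoord n D U T m - xcoord n D U T' m) by ring, h]
    ring

end Spines
end
end
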